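/- arXiv:1112.4879 — 7 statements merged into one kernel-verified Lean document; each statement's English description precedes it below -/
import Mathlib

section
/- Let β ∈ (0,1], let A1, A2, Q0, Q1, Q2 be positive integers, and for integers q0, q1, q2 define B′(q0,q1,q2) = {(g0,g1,g2) ∈ (1,4]³ : |g0·q0 + A1·g1·q1 + A2·g2·q2| < β}. Let B′ be the union of B′(q0,q1,q2) over all integer triples (q0,q1,q2) ≠ (0,0,0) with |q0| ≤ Q0, |q1| ≤ Q1, |q2| ≤ Q2. Then μ(B′) ≤ 504·β·( 2·min{Q2, Q0/A2} + min{Q1·Q̃2, Q0·Q̃2/A1, A2·Q̃2²/A1} + 2·min{Q1, Q0/A1} + min{Q2·Q̃1, Q0·Q̃1/A2, A1·Q̃1²/A2} ), where Q̃1 = min{Q1, 8·max{Q0, A2·Q2}/A1} and Q̃2 = min{Q2, 8·max{Q0, A1·Q1}/A2}. -/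
/-!
Exchanging the last two coordinates exchanges the roles of `(A₁, q₁)` and `(A₂, q₂)`, so it
suffices to bound the slabs `B′(q)` with `A₁ |q₁| ≤ A₂ |q₂|`; for these `q₂ ≠ 0` and, since the
linear form is smaller than `β ≤ 1`, also `A₂ |q₂| ≤ 4 |q₀| + 4 A₁ |q₁|`. Such a slab meets every
line parallel to the `g₂`-axis in an interval of length `2β / (A₂ |q₂|)`, and on such a line only
about `A₂ |q₂|` of the slabs with fixed `(q₁, q₂)` can occur, so by Fubini their union over all
`q₀ ∈ ℤ` has measure `O(β)`. Summing over the admissible `q₁, q₂`, with `q₀` either unrestricted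
or counted, yields the three alternatives in each minimum.
-/

open MeasureTheory Set
open scoped ENNReal

namespace MeasureTheory.Measure

theorem prod_le_mul_of_slice_le {α β : Type*} [MeasurableSpace α] [MeasurableSpace β]
    {μ : Measure α} {ν : Measure β} [SFinite ν] {S : Set (α × β)} (hS : MeasurableSet S)
    {s : Set α} (hs : MeasurableSet s) (hSs : ∀ p ∈ S, p.1 ∈ s) {C : ℝ≥0∞}
    (hC : ∀ a ∈ s, ν (Prod.mk a ⁻¹' S) ≤ C) :
    μ.prod ν S ≤ μ s * C := by
  rw [prod_apply hS, mul_comm, ← lintegral_indicator_const hs]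
  refine lintegral_mono fun a => ?_
  by_cases ha : a ∈ s
  · simpa [ha] using hC a ha
  · have : Prod.mk a ⁻¹' S = ∅ := eq_empty_of_forall_notMem fun b hb => ha (hSs _ hb)
    simp [ha, this]

end MeasureTheory.Measure

theorem measure_biUnion_finset_le_mul {α ι : Type*} [MeasurableSpace α] {μ : Measure α}
    {s : Finset ι} {f : ι → Set α} {N c : ℝ} (hN : (s.card : ℝ) ≤ N)
    (hf : ∀ i ∈ s, μ (f i) ≤ ENNReal.ofReal c) :
    μ (⋃ i ∈ s, f i) ≤ ENNReal.ofReal (N * c) := by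
  calc μ (⋃ i ∈ s, f i) ≤ ∑ i ∈ s, μ (f i) := measure_biUnion_finset_le s f
    _ ≤ s.card • ENNReal.ofReal c := Finset.sum_le_card_nsmul s _ _ hf
    _ = ENNReal.ofReal (s.card * c) := by
      rw [nsmul_eq_mul, ENNReal.ofReal_mul (by positivity), ENNReal.ofReal_natCast]
    _ ≤ ENNReal.ofReal (N * c) := by
      rcases le_or_gt 0 c with hc | hc
      · exact ENNReal.ofReal_le_ofReal (mul_le_mul_of_nonneg_right hN hc)
      · rw [ENNReal.ofReal_of_nonpos (mul_nonpos_of_nonneg_of_nonpos (by positivity) hc.le)]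
        exact zero_le

theorem Int.card_le_two_mul_of_abs_le {F : Finset ℤ} {N : ℝ} (hN : 0 ≤ N)
    (hF : ∀ n ∈ F, n ≠ 0 ∧ |(n : ℝ)| ≤ N) : (F.card : ℝ) ≤ 2 * N := by
  set m : ℕ := ⌊N⌋₊
  have hsub : F ⊆ (Finset.Icc (-(m : ℤ)) m).erase 0 := by
    intro n hn
    obtain ⟨hn0, hnN⟩ := hF n hn
    have hnm : n.natAbs ≤ m := Nat.le_floor (by rwa [Nat.cast_natAbs, Int.cast_abs])
    have : |n| ≤ m := by rw [Int.abs_eq_natAbs]; exact_mod_cast hnm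
    exact Finset.mem_erase.2 ⟨hn0, Finset.mem_Icc.2 (abs_le.1 this)⟩
  have hcard : ((Finset.Icc (-(m : ℤ)) m).erase 0).card = 2 * m := by
    rw [Finset.card_erase_of_mem (by simp), Int.card_Icc]
    omega
  calc (F.card : ℝ) ≤ (2 * m : ℕ) := by exact_mod_cast hcard ▸ Finset.card_le_card hsub
    _ ≤ 2 * N := by push_cast; linarith [Nat.floor_le hN]

theorem Int.card_Icc_ceil_floor_le {u v : ℝ} (huv : u ≤ v) :
    ((Finset.Icc ⌈u⌉ ⌊v⌋).card : ℝ) ≤ v - u + 1 := by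
  have hle : ⌈u⌉ ≤ ⌊v⌋ + 1 := by
    have : (⌈u⌉ : ℝ) < ⌊v⌋ + 2 := by linarith [Int.ceil_lt_add_one u, Int.lt_floor_add_one v]
    have : ⌈u⌉ < ⌊v⌋ + 2 := by exact_mod_cast this
    omega
  have hcard := Int.card_Icc_of_le _ _ hle
  have : ((Finset.Icc ⌈u⌉ ⌊v⌋).card : ℝ) = ⌊v⌋ + 1 - ⌈u⌉ := by exact_mod_cast hcard
  rw [this]
  linarith [Int.floor_le v, Int.le_ceil u]

theorem Real.volume_setOf_abs_add_mul_lt_le {a e β : ℝ} (he : e ≠ 0) :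
    volume {z : ℝ | |a + e * z| < β} ≤ ENNReal.ofReal (2 * β / |e|) := by
  have hsub : {z : ℝ | |a + e * z| < β} ⊆ Metric.ball (-a / e) (β / |e|) := by
    intro z hz
    have : (z - -a / e) * e = a + e * z := by field_simp; ring
    rwa [Metric.mem_ball, Real.dist_eq, lt_div_iff₀ (abs_pos.2 he), ← abs_mul, this]
  calc volume {z : ℝ | |a + e * z| < β} ≤ volume (Metric.ball (-a / e) (β / |e|)) :=
        measure_mono hsub
    _ = ENNReal.ofReal (2 * β / |e|) := by rw [Real.volume_ball, mul_div_assoc]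

/-- Overlap estimate: for each `z` only about `|e| (b - a)` integers `n` can make
`x * n + c + e * z` small, and each of them excludes a set of length `2 β / |e|`. -/
theorem Real.volume_setOf_exists_int_abs_lt_le {a b x c e β : ℝ} (hab : a ≤ b) (hx : 1 ≤ x)
    (he : 1 ≤ |e|) (hβ0 : 0 ≤ β) (hβ1 : β ≤ 1) :
    volume {z ∈ Ioc a b | ∃ n : ℤ, |x * n + c + e * z| < β}
      ≤ ENNReal.ofReal (2 * β * (b - a + 3)) := by
  have he0 : e ≠ 0 := by rintro rfl; norm_num at he
  obtain ⟨m, hm⟩ : ∃ m, m = -c - e * (a + b) / 2 := ⟨_, rfl⟩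
  obtain ⟨r, hr⟩ : ∃ r, r = |e| * (b - a) / 2 + β := ⟨_, rfl⟩
  have hsub : {z ∈ Ioc a b | ∃ n : ℤ, |x * n + c + e * z| < β}
      ⊆ ⋃ n ∈ Finset.Icc ⌈(m - r) / x⌉ ⌊(m + r) / x⌋, {z : ℝ | |(x * n + c) + e * z| < β} := by
    rintro z ⟨hz, n, hn⟩
    have hcentre : |e * z - e * (a + b) / 2| ≤ |e| * (b - a) / 2 := by
      rw [show e * z - e * (a + b) / 2 = e * (z - (a + b) / 2) by ring, abs_mul]
      have : |z - (a + b) / 2| ≤ (b - a) / 2 := abs_le.2 ⟨by linarith [hz.1], by linarith [hz.2]⟩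
      nlinarith [abs_nonneg e]
    have hxn : |x * n - m| < r := by
      calc |x * n - m| = |(x * n + c + e * z) - (e * z - e * (a + b) / 2)| := by
            rw [hm]; ring_nf
        _ ≤ |x * n + c + e * z| + |e * z - e * (a + b) / 2| := abs_sub _ _
        _ < r := by linarith
    obtain ⟨hlo, hhi⟩ := abs_lt.1 hxn
    have hx0 : 0 < x := by linarith
    refine mem_biUnion (Finset.mem_Icc.2 ⟨Int.ceil_le.2 ?_, Int.le_floor.2 ?_⟩) hn
    · rw [div_le_iff₀ hx0]; linarith
    · rw [le_div_iff₀ hx0]; linarith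
  have hcard : ((Finset.Icc ⌈(m - r) / x⌉ ⌊(m + r) / x⌋).card : ℝ) ≤ |e| * (b - a + 3) := by
    have hr0 : 0 ≤ r := by rw [hr]; nlinarith [abs_nonneg e]
    refine (Int.card_Icc_ceil_floor_le (by gcongr; linarith)).trans ?_
    have : (m + r) / x - (m - r) / x ≤ 2 * r := by
      rw [← sub_div, div_le_iff₀ (by linarith)]; nlinarith
    nlinarith
  calc volume {z ∈ Ioc a b | ∃ n : ℤ, |x * n + c + e * z| < β}
      ≤ ENNReal.ofReal (|e| * (b - a + 3) * (2 * β / |e|)) :=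
        (measure_mono hsub).trans (measure_biUnion_finset_le_mul hcard
          fun n _ => Real.volume_setOf_abs_add_mul_lt_le he0)
    _ = ENNReal.ofReal (2 * β * (b - a + 3)) := by
        congr 1; field_simp

theorem Int.abs_le_of_abs_lt_one {x y z : ℝ} (hx : x ∈ Ioc (1 : ℝ) 4) (hy : y ∈ Ioc (1 : ℝ) 4)
    (hz : z ∈ Ioc (1 : ℝ) 4) {a b c : ℤ} (h : |x * a + y * b + z * c| < 1) :
    |c| ≤ 4 * |a| + 4 * |b| := by
  have hbound : ∀ w ∈ Ioc (1 : ℝ) 4, ∀ k : ℤ, |w * k| ≤ 4 * |(k : ℝ)| := fun w hw k => by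
    rw [abs_mul, abs_of_pos (by linarith [hw.1])]
    exact mul_le_mul_of_nonneg_right hw.2 (abs_nonneg _)
  have hlt : (|c| : ℝ) < 4 * |a| + 4 * |b| + 1 :=
    calc (|c| : ℝ) ≤ |z * c| := by
          rw [abs_mul]
          exact le_mul_of_one_le_left (abs_nonneg _) (by linarith [hz.1, le_abs_self z])
      _ = |(x * a + y * b + z * c) - x * a - y * b| := by ring_nf
      _ ≤ |x * a + y * b + z * c| + |x * a| + |y * b| := by
          linarith [abs_sub (x * a + y * b + z * c - x * a) (y * b),
            abs_sub (x * a + y * b + z * c) (x * a)]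
      _ < 4 * |a| + 4 * |b| + 1 := by
          push_cast; linarith [hbound x hx a, hbound y hy b]
  have : |c| < 4 * |a| + 4 * |b| + 1 := by exact_mod_cast hlt
  omega

theorem volume_le_of_slice_le {S : Set (ℝ × ℝ × ℝ)} (hS : MeasurableSet S)
    (hSs : ∀ g ∈ S, g.1 ∈ Ioc (1 : ℝ) 4 ∧ g.2.1 ∈ Ioc (1 : ℝ) 4) {C : ℝ}
    (hC : ∀ x ∈ Ioc (1 : ℝ) 4, ∀ y ∈ Ioc (1 : ℝ) 4,
      volume {z : ℝ | (x, y, z) ∈ S} ≤ ENNReal.ofReal C) :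
    volume S ≤ ENNReal.ofReal (9 * C) := by
  have hvol : volume (Ioc (1 : ℝ) 4) = ENNReal.ofReal 3 := by norm_num [Real.volume_Ioc]
  calc volume S ≤ volume (Ioc (1 : ℝ) 4) * (volume (Ioc (1 : ℝ) 4) * ENNReal.ofReal C) := by
        refine Measure.prod_le_mul_of_slice_le hS measurableSet_Ioc (fun g hg => (hSs g hg).1)
          fun x hx => ?_
        exact Measure.prod_le_mul_of_slice_le (hS.preimage measurable_prodMk_left)
          measurableSet_Ioc (fun g hg => (hSs _ hg).2) (hC x hx)
    _ = ENNReal.ofReal (9 * C) := by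
        rw [hvol, ← ENNReal.ofReal_mul (by norm_num), ← ENNReal.ofReal_mul (by norm_num)]
        ring_nf

/-- The paper's `B′(q₀, q₁, q₂)`. -/
def slab (A1 A2 : ℕ) (β : ℝ) (q0 q1 q2 : ℤ) : Set (ℝ × ℝ × ℝ) :=
  {g | g.1 ∈ Ioc (1 : ℝ) 4 ∧ g.2.1 ∈ Ioc (1 : ℝ) 4 ∧ g.2.2 ∈ Ioc (1 : ℝ) 4 ∧
    |g.1 * q0 + A1 * g.2.1 * q1 + A2 * g.2.2 * q2| < β}

section Slab

variable {A1 A2 : ℕ} {β : ℝ} {q0 q1 q2 : ℤ} {g : ℝ × ℝ × ℝ}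

theorem measurableSet_slab : MeasurableSet (slab A1 A2 β q0 q1 q2) := by
  simp only [slab, ofPred_and]
  refine (measurable_fst measurableSet_Ioc).inter <|
    (measurable_fst.comp measurable_snd measurableSet_Ioc).inter <|
    (measurable_snd.comp measurable_snd measurableSet_Ioc).inter ?_
  exact measurableSet_lt (by fun_prop) measurable_const

theorem volume_slab_le (hA2 : 0 < A2) (hq2 : q2 ≠ 0) :
    volume (slab A1 A2 β q0 q1 q2) ≤ ENNReal.ofReal (18 * β / (A2 * |(q2 : ℝ)|)) := by
  have he : (A2 * q2 : ℝ) ≠ 0 := by positivity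
  calc volume (slab A1 A2 β q0 q1 q2) ≤ ENNReal.ofReal (9 * (2 * β / |(A2 * q2 : ℝ)|)) := by
        refine volume_le_of_slice_le measurableSet_slab (fun g hg => ⟨hg.1, hg.2.1⟩)
          fun x _ y _ => (measure_mono fun z hz => ?_).trans
            (Real.volume_setOf_abs_add_mul_lt_le (a := x * q0 + A1 * y * q1) he)
        simpa only [mem_ofPred_eq, add_assoc, mul_right_comm (A2 : ℝ)] using hz.2.2.2
    _ = ENNReal.ofReal (18 * β / (A2 * |(q2 : ℝ)|)) := by
        rw [abs_mul, Nat.abs_cast]; ring_nf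

theorem volume_iUnion_slab_le (hβ0 : 0 ≤ β) (hβ1 : β ≤ 1) (hA2 : 0 < A2) (hq2 : q2 ≠ 0) :
    volume (⋃ q0 : ℤ, slab A1 A2 β q0 q1 q2) ≤ ENNReal.ofReal (108 * β) := by
  have he : 1 ≤ |(A2 * q2 : ℝ)| := by
    rw [abs_mul, Nat.abs_cast]
    exact one_le_mul_of_one_le_of_one_le (by exact_mod_cast hA2)
      (by exact_mod_cast Int.one_le_abs hq2)
  calc volume (⋃ q0 : ℤ, slab A1 A2 β q0 q1 q2)
      ≤ ENNReal.ofReal (9 * (2 * β * (4 - 1 + 3))) := by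
        refine volume_le_of_slice_le (MeasurableSet.iUnion fun _ => measurableSet_slab)
          (fun g hg => ?_) fun x hx y _ => (measure_mono fun z hz => ?_).trans
            (Real.volume_setOf_exists_int_abs_lt_le (c := A1 * y * q1) (by norm_num) hx.1.le he
              hβ0 hβ1)
        · obtain ⟨q0, hg⟩ := mem_iUnion.1 hg
          exact ⟨hg.1, hg.2.1⟩
        · obtain ⟨q0, hz⟩ := mem_iUnion.1 hz
          exact ⟨hz.2.2.1, q0, by simpa only [mul_right_comm (A2 : ℝ)] using hz.2.2.2⟩
    _ = ENNReal.ofReal (108 * β) := by ring_nf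

theorem abs_le_of_mem_slab (hβ1 : β ≤ 1) (hg : g ∈ slab A1 A2 β q0 q1 q2) :
    A2 * |q2| ≤ 4 * |q0| + 4 * (A1 * |q1|) := by
  have h : |g.1 * q0 + g.2.1 * ((A1 * q1 : ℤ) : ℝ) + g.2.2 * ((A2 * q2 : ℤ) : ℝ)| < 1 := by
    push_cast
    simpa only [mul_left_comm g.2.1, mul_left_comm g.2.2, mul_assoc] using hg.2.2.2.trans_le hβ1
  simpa [abs_mul] using Int.abs_le_of_abs_lt_one hg.1 hg.2.1 hg.2.2.1 h

theorem eq_zero_of_mem_slab_zero_zero (hβ1 : β ≤ 1) (hg : g ∈ slab A1 A2 β q0 0 0) : q0 = 0 := by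
  have h : |g.2.1 * (0 : ℤ) + g.2.2 * (0 : ℤ) + g.1 * q0| < 1 := by
    simpa using hg.2.2.2.trans_le hβ1
  simpa using Int.abs_le_of_abs_lt_one hg.2.1 hg.2.2.1 hg.1 h

theorem ne_zero_of_mem_slab (hβ1 : β ≤ 1) (hA1 : 0 < A1) (hg : g ∈ slab A1 A2 β q0 q1 q2)
    (hq : (q0, q1, q2) ≠ (0, 0, 0)) (hdom : A1 * |q1| ≤ A2 * |q2|) : q2 ≠ 0 := by
  rintro rfl
  obtain rfl : q1 = 0 := abs_nonpos_iff.1 <|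
    nonpos_of_mul_nonpos_right (by simpa using hdom) (by exact_mod_cast hA1)
  exact hq (by simp [eq_zero_of_mem_slab_zero_zero hβ1 hg])

end Slab

def swapYZ : (ℝ × ℝ × ℝ) ≃ᵐ (ℝ × ℝ × ℝ) :=
  (MeasurableEquiv.refl ℝ).prodCongr MeasurableEquiv.prodComm

theorem measurePreserving_swapYZ : MeasurePreserving swapYZ volume volume :=
  (MeasurePreserving.id volume).prod Measure.measurePreserving_swap

@[simp]
theorem swapYZ_apply (g : ℝ × ℝ × ℝ) : swapYZ g = (g.1, g.2.2, g.2.1) := rfl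

theorem swapYZ_mem_slab {A1 A2 : ℕ} {β : ℝ} {q0 q1 q2 : ℤ} {g : ℝ × ℝ × ℝ} :
    swapYZ g ∈ slab A2 A1 β q0 q2 q1 ↔ g ∈ slab A1 A2 β q0 q1 q2 := by
  simp only [slab, swapYZ_apply, mem_ofPred_eq, add_right_comm _ (_ * g.2.2 * _)]
  tauto

noncomputable def boundedNonzero (Q A : ℕ) (M : ℤ) : Finset ℤ :=
  {n ∈ Finset.Icc (-(Q : ℤ)) Q | n ≠ 0 ∧ A * |n| ≤ M}

section BoundedNonzero

variable {Q A : ℕ} {M n : ℤ}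

theorem abs_le_min_of_mem_boundedNonzero (hA : 0 < A) (hn : n ∈ boundedNonzero Q A M) :
    |(n : ℝ)| ≤ min (Q : ℝ) (M / A) := by
  obtain ⟨hnQ, -, hnM⟩ := Finset.mem_filter.1 hn
  refine le_min ?_ ?_
  · exact_mod_cast abs_le.2 (Finset.mem_Icc.1 hnQ)
  · rw [le_div_iff₀ (by exact_mod_cast hA), mul_comm]
    exact_mod_cast hnM

theorem card_boundedNonzero_le (hA : 0 < A) (hM : 0 ≤ M) :
    ((boundedNonzero Q A M).card : ℝ) ≤ 2 * min (Q : ℝ) (M / A) :=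
  Int.card_le_two_mul_of_abs_le (by positivity) fun n hn =>
    ⟨(Finset.mem_filter.1 hn).2.1, abs_le_min_of_mem_boundedNonzero hA hn⟩

end BoundedNonzero

def dominantSlabs (β : ℝ) (A1 A2 Q0 Q1 Q2 : ℕ) : Set (ℝ × ℝ × ℝ) :=
  ⋃ (q0 : ℤ) (q1 : ℤ) (q2 : ℤ) (_ : q2 ≠ 0) (_ : A1 * |q1| ≤ A2 * |q2|)
    (_ : |q0| ≤ (Q0 : ℤ)) (_ : |q1| ≤ (Q1 : ℤ)) (_ : |q2| ≤ (Q2 : ℤ)), slab A1 A2 β q0 q1 q2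

section Dominant

variable {β : ℝ} {A1 A2 Q0 Q1 Q2 : ℕ}

theorem iUnion_slab_subset (hβ1 : β ≤ 1) (hA1 : 0 < A1) (hA2 : 0 < A2) :
    (⋃ (q0 : ℤ) (q1 : ℤ) (q2 : ℤ) (_ : (q0, q1, q2) ≠ (0, 0, 0))
        (_ : |q0| ≤ (Q0 : ℤ)) (_ : |q1| ≤ (Q1 : ℤ)) (_ : |q2| ≤ (Q2 : ℤ)),
        slab A1 A2 β q0 q1 q2)
      ⊆ dominantSlabs β A1 A2 Q0 Q1 Q2 ∪ swapYZ ⁻¹' dominantSlabs β A2 A1 Q0 Q2 Q1 := by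
  simp only [iUnion_subset_iff]
  intro q0 q1 q2 hq h0 h1 h2 g hg
  rcases le_total ((A1 : ℤ) * |q1|) (A2 * |q2|) with hdom | hdom
  · left
    simp only [dominantSlabs, mem_iUnion]
    exact ⟨q0, q1, q2, ne_zero_of_mem_slab hβ1 hA1 hg hq hdom, hdom, h0, h1, h2, hg⟩
  · right
    have hg' := swapYZ_mem_slab.2 hg
    have hq' : (q0, q2, q1) ≠ (0, 0, 0) := by
      simp only [ne_eq, Prod.mk.injEq] at hq ⊢; tauto
    simp only [dominantSlabs, mem_preimage, mem_iUnion]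
    exact ⟨q0, q2, q1, ne_zero_of_mem_slab hβ1 hA2 hg' hq' hdom, hdom, h0, h2, h1, hg'⟩

theorem dominantSlabs_subset (hβ1 : β ≤ 1) :
    dominantSlabs β A1 A2 Q0 Q1 Q2 ⊆
      (⋃ q2 ∈ boundedNonzero Q2 A2 (4 * Q0), ⋃ q0 : ℤ, slab A1 A2 β q0 0 q2) ∪
      ⋃ q2 ∈ boundedNonzero Q2 A2 (4 * Q0 + 4 * (A1 * Q1)),
        ⋃ q1 ∈ boundedNonzero Q1 A1 (A2 * |q2|), ⋃ q0 ∈ Finset.Icc (-(Q0 : ℤ)) Q0,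
          slab A1 A2 β q0 q1 q2 := by
  simp only [dominantSlabs, iUnion_subset_iff]
  intro q0 q1 q2 hq2 hdom h0 h1 h2 g hg
  have hkey := abs_le_of_mem_slab hβ1 hg
  have hmem : ∀ M, A2 * |q2| ≤ M → q2 ∈ boundedNonzero Q2 A2 M := fun M hM =>
    Finset.mem_filter.2 ⟨Finset.mem_Icc.2 (abs_le.1 h2), hq2, hM⟩
  rcases eq_or_ne q1 0 with rfl | hq1
  · left
    exact mem_iUnion₂.2 ⟨q2, hmem _ (by simp only [abs_zero, mul_zero, add_zero] at hkey; linarith), mem_iUnion.2 ⟨q0, hg⟩⟩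
  · right
    have hq1Q : (A1 : ℤ) * |q1| ≤ A1 * Q1 := mul_le_mul_of_nonneg_left h1 (by positivity)
    refine mem_iUnion₂.2 ⟨q2, hmem _ (by linarith), mem_iUnion₂.2 ⟨q1, ?_, mem_iUnion₂.2
      ⟨q0, Finset.mem_Icc.2 (abs_le.1 h0), hg⟩⟩⟩
    exact Finset.mem_filter.2 ⟨Finset.mem_Icc.2 (abs_le.1 h1), hq1, hdom⟩

theorem volume_biUnion_slab_of_q1_eq_zero_le (hβ0 : 0 ≤ β) (hβ1 : β ≤ 1) (hA2 : 0 < A2) :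
    volume (⋃ q2 ∈ boundedNonzero Q2 A2 (4 * Q0), ⋃ q0 : ℤ, slab A1 A2 β q0 0 q2)
      ≤ ENNReal.ofReal (864 * β * min (Q2 : ℝ) (Q0 / A2)) := by
  have hmin : min (Q2 : ℝ) (4 * Q0 / A2) ≤ 4 * min (Q2 : ℝ) (Q0 / A2) := by
    rw [mul_min_of_nonneg _ _ (by norm_num)]
    exact min_le_min (by linarith [Nat.cast_nonneg (α := ℝ) Q2]) (by rw [mul_div_assoc])
  calc _ ≤ ENNReal.ofReal (2 * min (Q2 : ℝ) ((4 * Q0 : ℤ) / A2) * (108 * β)) :=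
        measure_biUnion_finset_le_mul (card_boundedNonzero_le hA2 (by positivity)) fun q2 hq2 =>
          volume_iUnion_slab_le hβ0 hβ1 hA2 (Finset.mem_filter.1 hq2).2.1
    _ ≤ ENNReal.ofReal (864 * β * min (Q2 : ℝ) (Q0 / A2)) := by
        push_cast
        exact ENNReal.ofReal_le_ofReal (by nlinarith [mul_le_mul_of_nonneg_left hmin hβ0])

/-- Counting `q₁` and bounding the union over all `q₀` gives the factors `Q₁` and
`A₂ |q₂| / A₁`; counting `q₁` and `q₀` and bounding single slabs gives `Q₀ / A₁`. -/
theorem volume_biUnion_biUnion_slab_le (hβ0 : 0 ≤ β) (hβ1 : β ≤ 1) (hA1 : 0 < A1)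
    (hA2 : 0 < A2) (hQ0 : 0 < Q0) {q2 : ℤ} (hq2 : q2 ≠ 0) :
    volume (⋃ q1 ∈ boundedNonzero Q1 A1 (A2 * |q2|), ⋃ q0 ∈ Finset.Icc (-(Q0 : ℤ)) Q0,
        slab A1 A2 β q0 q1 q2)
      ≤ ENNReal.ofReal (216 * β * min (Q1 : ℝ) (min (Q0 / A1) (A2 * |(q2 : ℝ)| / A1))) := by
  have hA1r : (0 : ℝ) < A1 := by exact_mod_cast hA1
  have hq2r : (0 : ℝ) < A2 * |(q2 : ℝ)| := by positivity
  have hcard : ((boundedNonzero Q1 A1 (A2 * |q2|)).card : ℝ)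
      ≤ 2 * min (Q1 : ℝ) (A2 * |(q2 : ℝ)| / A1) := by
    simpa using card_boundedNonzero_le (Q := Q1) hA1 (M := A2 * |q2|) (by positivity)
  have hIcc : ((Finset.Icc (-(Q0 : ℤ)) Q0).card : ℝ) ≤ 3 * Q0 := by
    have : (Finset.Icc (-(Q0 : ℤ)) Q0).card = 2 * Q0 + 1 := by rw [Int.card_Icc]; omega
    rw [this]; push_cast; linarith [(Nat.one_le_cast (α := ℝ)).2 hQ0]
  set U := ⋃ q1 ∈ boundedNonzero Q1 A1 (A2 * |q2|), ⋃ q0 ∈ Finset.Icc (-(Q0 : ℤ)) Q0,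
    slab A1 A2 β q0 q1 q2
  have hunion : volume U ≤ ENNReal.ofReal (2 * min (Q1 : ℝ) (A2 * |(q2 : ℝ)| / A1) * (108 * β)) :=
    measure_biUnion_finset_le_mul hcard fun q1 _ =>
      (measure_mono (iUnion₂_subset fun q0 _ => subset_iUnion (slab A1 A2 β · q1 q2) q0)).trans
        (volume_iUnion_slab_le hβ0 hβ1 hA2 hq2)
  have hslabs : volume U ≤ ENNReal.ofReal
      (2 * (A2 * |(q2 : ℝ)| / A1) * (3 * Q0 * (18 * β / (A2 * |(q2 : ℝ)|)))) :=
    measure_biUnion_finset_le_mul (hcard.trans (by gcongr; exact min_le_right _ _)) fun q1 _ =>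
      measure_biUnion_finset_le_mul hIcc fun q0 _ => volume_slab_le hA2 hq2
  rw [mul_min_of_nonneg _ _ (by positivity), mul_min_of_nonneg _ _ (by positivity),
    ENNReal.ofReal_min, ENNReal.ofReal_min]
  refine le_min (hunion.trans (ENNReal.ofReal_le_ofReal ?_)) (le_min
    (hslabs.trans (ENNReal.ofReal_le_ofReal ?_)) (hunion.trans (ENNReal.ofReal_le_ofReal ?_)))
  · nlinarith [min_le_left (Q1 : ℝ) (A2 * |(q2 : ℝ)| / A1)]
  · rw [show 2 * (A2 * |(q2 : ℝ)| / A1) * (3 * Q0 * (18 * β / (A2 * |(q2 : ℝ)|)))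
      = 108 * β * (Q0 / A1) by field_simp; ring]
    nlinarith [show (0 : ℝ) ≤ β * (Q0 / A1) by positivity]
  · nlinarith [min_le_right (Q1 : ℝ) (A2 * |(q2 : ℝ)| / A1)]

theorem volume_biUnion_slab_of_q1_ne_zero_le (hβ0 : 0 ≤ β) (hβ1 : β ≤ 1) (hA1 : 0 < A1)
    (hA2 : 0 < A2) (hQ0 : 0 < Q0) {Qt : ℝ}
    (hQt : Qt = min (Q2 : ℝ) (8 * max (Q0 : ℝ) (A1 * Q1) / A2)) :
    volume (⋃ q2 ∈ boundedNonzero Q2 A2 (4 * Q0 + 4 * (A1 * Q1)),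
        ⋃ q1 ∈ boundedNonzero Q1 A1 (A2 * |q2|), ⋃ q0 ∈ Finset.Icc (-(Q0 : ℤ)) Q0,
          slab A1 A2 β q0 q1 q2)
      ≤ ENNReal.ofReal (432 * β * min (Q1 * Qt) (min (Q0 * Qt / A1) (A2 * Qt ^ 2 / A1))) := by
  have hQt0 : 0 ≤ Qt := by rw [hQt]; positivity
  have habs : ∀ q2 ∈ boundedNonzero Q2 A2 (4 * Q0 + 4 * (A1 * Q1)), |(q2 : ℝ)| ≤ Qt := by
    intro q2 hq2
    refine (abs_le_min_of_mem_boundedNonzero hA2 hq2).trans ?_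
    rw [hQt]
    push_cast
    gcongr
    linarith [le_max_left (Q0 : ℝ) (A1 * Q1), le_max_right (Q0 : ℝ) (A1 * Q1)]
  have hcard : ((boundedNonzero Q2 A2 (4 * Q0 + 4 * (A1 * Q1))).card : ℝ) ≤ 2 * Qt :=
    Int.card_le_two_mul_of_abs_le hQt0 fun q2 hq2 => ⟨(Finset.mem_filter.1 hq2).2.1, habs q2 hq2⟩
  have hdistrib : min (Q1 * Qt) (min (Q0 * Qt / A1) (A2 * Qt ^ 2 / A1))
      = Qt * min (Q1 : ℝ) (min (Q0 / A1) (A2 * Qt / A1)) := by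
    rw [mul_min_of_nonneg _ _ hQt0, mul_min_of_nonneg _ _ hQt0]
    congr 1 <;> [ring; congr 1 <;> ring]
  calc _ ≤ ENNReal.ofReal (2 * Qt * (216 * β * min (Q1 : ℝ) (min (Q0 / A1) (A2 * Qt / A1)))) :=
        measure_biUnion_finset_le_mul hcard fun q2 hq2 =>
          (volume_biUnion_biUnion_slab_le hβ0 hβ1 hA1 hA2 hQ0 (Finset.mem_filter.1 hq2).2.1).trans
            (ENNReal.ofReal_le_ofReal (by gcongr; exact habs q2 hq2))
    _ = _ := by rw [hdistrib]; ring_nf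

theorem volume_dominantSlabs_le (hβ0 : 0 ≤ β) (hβ1 : β ≤ 1) (hA1 : 0 < A1) (hA2 : 0 < A2)
    (hQ0 : 0 < Q0) {Qt : ℝ} (hQt : Qt = min (Q2 : ℝ) (8 * max (Q0 : ℝ) (A1 * Q1) / A2)) :
    volume (dominantSlabs β A1 A2 Q0 Q1 Q2) ≤ ENNReal.ofReal (504 * β *
      (2 * min (Q2 : ℝ) (Q0 / A2) + min (Q1 * Qt) (min (Q0 * Qt / A1) (A2 * Qt ^ 2 / A1)))) := by
  have hQt0 : 0 ≤ Qt := by rw [hQt]; positivity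
  calc _ ≤ _ := (measure_mono (μ := volume) (dominantSlabs_subset hβ1)).trans (measure_union_le _ _)
    _ ≤ ENNReal.ofReal (864 * β * min (Q2 : ℝ) (Q0 / A2)) + ENNReal.ofReal
          (432 * β * min (Q1 * Qt) (min (Q0 * Qt / A1) (A2 * Qt ^ 2 / A1))) :=
        add_le_add (volume_biUnion_slab_of_q1_eq_zero_le hβ0 hβ1 hA2)
          (volume_biUnion_slab_of_q1_ne_zero_le hβ0 hβ1 hA1 hA2 hQ0 hQt)
    _ ≤ _ := by
        rw [← ENNReal.ofReal_add (by positivity) (by positivity)]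
        refine ENNReal.ofReal_le_ofReal ?_
        nlinarith [show 0 ≤ β * min (Q2 : ℝ) (Q0 / A2) by positivity,
          show 0 ≤ β * min (Q1 * Qt) (min (Q0 * Qt / A1) (A2 * Qt ^ 2 / A1)) by positivity]

end Dominant

theorem stmt_0_general (β : ℝ) (hβ : β ∈ Set.Ioc (0:ℝ) 1)
    (A1 A2 Q0 Q1 Q2 : ℕ) (hA1 : 0 < A1) (hA2 : 0 < A2)
    (hQ0 : 0 < Q0)
    (Qt1 Qt2 : ℝ)
    (hQt1 : Qt1 = min (Q1 : ℝ) (8 * max (Q0 : ℝ) ((A2 : ℝ) * Q2) / (A1 : ℝ)))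
    (hQt2 : Qt2 = min (Q2 : ℝ) (8 * max (Q0 : ℝ) ((A1 : ℝ) * Q1) / (A2 : ℝ))) :
    volume (⋃ (q0 : ℤ) (q1 : ℤ) (q2 : ℤ) (_ : (q0, q1, q2) ≠ (0, 0, 0))
        (_ : |q0| ≤ (Q0 : ℤ)) (_ : |q1| ≤ (Q1 : ℤ)) (_ : |q2| ≤ (Q2 : ℤ)),
        {g : ℝ × ℝ × ℝ |
          g.1 ∈ Set.Ioc (1:ℝ) 4 ∧ g.2.1 ∈ Set.Ioc (1:ℝ) 4 ∧ g.2.2 ∈ Set.Ioc (1:ℝ) 4 ∧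
          |g.1 * (q0 : ℝ) + (A1 : ℝ) * g.2.1 * (q1 : ℝ) + (A2 : ℝ) * g.2.2 * (q2 : ℝ)| < β})
      ≤ ENNReal.ofReal (504 * β *
          (2 * min (Q2 : ℝ) ((Q0 : ℝ) / (A2 : ℝ))
            + min ((Q1 : ℝ) * Qt2) (min ((Q0 : ℝ) * Qt2 / (A1 : ℝ)) ((A2 : ℝ) * Qt2 ^ 2 / (A1 : ℝ)))
            + 2 * min (Q1 : ℝ) ((Q0 : ℝ) / (A1 : ℝ))
            + min ((Q2 : ℝ) * Qt1) (min ((Q0 : ℝ) * Qt1 / (A2 : ℝ)) ((A1 : ℝ) * Qt1 ^ 2 / (A2 : ℝ))))) := by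
  obtain ⟨hβ0, hβ1⟩ := hβ
  subst hQt1 hQt2
  calc _ ≤ volume (dominantSlabs β A1 A2 Q0 Q1 Q2 ∪ swapYZ ⁻¹' dominantSlabs β A2 A1 Q0 Q2 Q1) :=
        measure_mono (iUnion_slab_subset hβ1 hA1 hA2)
    _ ≤ volume (dominantSlabs β A1 A2 Q0 Q1 Q2) + volume (dominantSlabs β A2 A1 Q0 Q2 Q1) :=
        (measure_union_le _ _).trans_eq
          (congrArg _ (measurePreserving_swapYZ.measure_preimage_equiv _))
    _ ≤ _ := add_le_add (volume_dominantSlabs_le hβ0.le hβ1 hA1 hA2 hQ0 rfl)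
        (volume_dominantSlabs_le hβ0.le hβ1 hA2 hA1 hQ0 rfl)
    _ = _ := by
        rw [← ENNReal.ofReal_add (by positivity) (by positivity)]
        ring_nf

/-- non-asymptotic asymmetric extension of Groshev's theorem
(Lemma 6 of the paper). -/
theorem stmt_0 (β : ℝ) (hβ : β ∈ Set.Ioc (0:ℝ) 1)
    (A1 A2 Q0 Q1 Q2 : ℕ) (hA1 : 0 < A1) (hA2 : 0 < A2)
    (hQ0 : 0 < Q0) (hQ1 : 0 < Q1) (hQ2 : 0 < Q2)
    (Qt1 Qt2 : ℝ)
    (hQt1 : Qt1 = min (Q1 : ℝ) (8 * max (Q0 : ℝ) ((A2 : ℝ) * Q2) / (A1 : ℝ)))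
    (hQt2 : Qt2 = min (Q2 : ℝ) (8 * max (Q0 : ℝ) ((A1 : ℝ) * Q1) / (A2 : ℝ))) :
    volume (⋃ (q0 : ℤ) (q1 : ℤ) (q2 : ℤ) (_ : (q0, q1, q2) ≠ (0, 0, 0))
        (_ : |q0| ≤ (Q0 : ℤ)) (_ : |q1| ≤ (Q1 : ℤ)) (_ : |q2| ≤ (Q2 : ℤ)),
        {g : ℝ × ℝ × ℝ |
          g.1 ∈ Set.Ioc (1:ℝ) 4 ∧ g.2.1 ∈ Set.Ioc (1:ℝ) 4 ∧ g.2.2 ∈ Set.Ioc (1:ℝ) 4 ∧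
          |g.1 * (q0 : ℝ) + (A1 : ℝ) * g.2.1 * (q1 : ℝ) + (A2 : ℝ) * g.2.2 * (q2 : ℝ)| < β})
      ≤ ENNReal.ofReal (504 * β *
          (2 * min (Q2 : ℝ) ((Q0 : ℝ) / (A2 : ℝ))
            + min ((Q1 : ℝ) * Qt2) (min ((Q0 : ℝ) * Qt2 / (A1 : ℝ)) ((A2 : ℝ) * Qt2 ^ 2 / (A1 : ℝ)))
            + 2 * min (Q1 : ℝ) ((Q0 : ℝ) / (A1 : ℝ))
            + min ((Q2 : ℝ) * Qt1) (min ((Q0 : ℝ) * Qt1 / (A2 : ℝ)) ((A1 : ℝ) * Qt1 ^ 2 / (A2 : ℝ))))) :=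
  stmt_0_general β hβ A1 A2 Q0 Q1 Q2 hA1 hA2 hQ0 Qt1 Qt2 hQt1 hQt2
end

section
/- Let g0 ∈ (1,4], let β ∈ (0,1], let A1, A2, Q0 be positive integers, and let q1, q2 be integers with q2 ≠ 0 and A1·|q1| ≤ A2·|q2|. Then the two-dimensional Lebesgue measure of the set {(g1,g2) ∈ (1,4]² : there exists an integer q0 with |q0| ≤ Q0 and |g0·q0 + A1·g1·q1 + A2·g2·q2| < β} is at most 42·β·min{Q0/(A2·|q2|), 1}. -/
open MeasureTheory

open Set

set_option maxHeartbeats 1000000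


lemma slice_bd (g0 β : ℝ) (hg0l : 1 < g0)
    (hβ0 : 0 < β) (hβ1 : β ≤ 1)
    (A1 A2 Q0 : ℕ) (hA2 : 0 < A2) (hQ0 : 0 < Q0)
    (q1 q2 : ℤ) (hq2 : q2 ≠ 0) (x : ℝ) :
    volume (⋃ k ∈ Finset.Icc (-(Q0:ℤ)) (Q0:ℤ),
        {y : ℝ | x ∈ Set.Ioc (1:ℝ) 4 ∧ y ∈ Set.Ioc (1:ℝ) 4 ∧
          |g0 * (k:ℝ) + (A1:ℝ) * x * (q1:ℝ) + (A2:ℝ) * y * (q2:ℝ)| < β})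
      ≤ ENNReal.ofReal (14 * β * min ((Q0 : ℝ) / ((A2 : ℝ) * |(q2 : ℝ)|)) 1) := by
  obtain ⟨e, he_def⟩ : ∃ e : ℝ, e = (A2:ℝ) * (q2:ℝ) := ⟨_, rfl⟩
  obtain ⟨D, hDdef⟩ : ∃ D : ℝ, D = (A2:ℝ) * |(q2:ℝ)| := ⟨_, rfl⟩
  have hq2' : (1:ℝ) ≤ |(q2:ℝ)| := by
    have := Int.one_le_abs hq2
    calc (1:ℝ) ≤ ((|q2| : ℤ) : ℝ) := by exact_mod_cast this
    _ = |(q2:ℝ)| := by push_cast; ring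
  have hA2' : (1:ℝ) ≤ (A2:ℝ) := by exact_mod_cast hA2
  have hD1 : 1 ≤ D := by nlinarith
  have hD0 : 0 < D := by linarith
  have heD : |e| = D := by rw [he_def, hDdef, abs_mul, Nat.abs_cast]
  have he0 : e ≠ 0 := by
    intro h; rw [h, abs_zero] at heD; linarith [heD]
  have hg0p : (0:ℝ) < g0 := by linarith
  obtain ⟨a, hadef⟩ : ∃ a : ℝ, a = (A1:ℝ) * x * (q1:ℝ) := ⟨_, rfl⟩
  obtain ⟨u, hudef⟩ : ∃ u : ℝ, u = (-β - a - max e (4*e)) / g0 := ⟨_, rfl⟩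
  obtain ⟨v, hvdef⟩ : ∃ v : ℝ, v = (β - a - min e (4*e)) / g0 := ⟨_, rfl⟩
  obtain ⟨Kx, hKdef⟩ : ∃ K : Finset ℤ, K = Finset.Icc (max (-(Q0:ℤ)) (⌊u⌋+1)) (min (Q0:ℤ) ⌊v⌋) := ⟨_, rfl⟩
  have hmaxmin : max e (4*e) - min e (4*e) = 3 * D := by
    rw [← heD]
    rcases le_total 0 e with h | h
    · rw [max_eq_right (by linarith), min_eq_left (by linarith), abs_of_nonneg h]; ring
    · rw [max_eq_left (by linarith), min_eq_right (by linarith), abs_of_nonpos h]; ring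
  have hvu : v - u ≤ 3 * D + 2 := by
    have : v - u = (2*β + 3*D) / g0 := by
      rw [hudef, hvdef, div_sub_div_same]; rw [← hmaxmin]; ring_nf
    rw [this]
    have h1 : (2*β + 3*D) / g0 ≤ 2*β + 3*D := by
      apply div_le_self (by linarith) (by linarith)
    linarith
  -- inclusion into union of intervals
  have hsub : (⋃ k ∈ Finset.Icc (-(Q0:ℤ)) (Q0:ℤ),
        {y : ℝ | x ∈ Set.Ioc (1:ℝ) 4 ∧ y ∈ Set.Ioc (1:ℝ) 4 ∧
          |g0 * (k:ℝ) + (A1:ℝ) * x * (q1:ℝ) + (A2:ℝ) * y * (q2:ℝ)| < β})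
      ⊆ ⋃ k ∈ Kx, Set.Ioo ((-(g0*(k:ℝ)) - a)/e - β/D) ((-(g0*(k:ℝ)) - a)/e + β/D) := by
    intro y hy
    simp only [Set.mem_iUnion, Finset.mem_Icc, exists_prop, Set.mem_setOf_eq] at hy
    obtain ⟨k, ⟨hk1, hk2⟩, hx, hyy, habs⟩ := hy
    have hey : (A2:ℝ) * y * (q2:ℝ) = e * y := by rw [he_def]; ring
    rw [hey] at habs
    obtain ⟨hab1, hab2⟩ := abs_lt.mp habs
    have hm : min e (4*e) ≤ e*y := by
      rcases le_total 0 e with h | h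
      · exact le_trans (min_le_left _ _) (by nlinarith [hyy.1])
      · exact le_trans (min_le_right _ _) (by nlinarith [hyy.2])
    have hM : e*y ≤ max e (4*e) := by
      rcases le_total 0 e with h | h
      · exact le_trans (by nlinarith [hyy.2]) (le_max_right _ _)
      · exact le_trans (by nlinarith [hyy.1]) (le_max_left _ _)
    have hku : u < (k:ℝ) := by
      rw [hudef]
      rw [div_lt_iff₀ hg0p]
      linarith [mul_comm (k:ℝ) g0, hab1, hab2, hm, hM]
    have hkv : (k:ℝ) < v := by
      rw [hvdef]
      rw [lt_div_iff₀ hg0p]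
      linarith [mul_comm (k:ℝ) g0, hab1, hab2, hm, hM]
    have hkK : k ∈ Kx := by
      rw [hKdef, Finset.mem_Icc]
      refine ⟨max_le (by omega) ?_, le_min (by omega) ?_⟩
      · exact Int.add_one_le_iff.mpr (Int.floor_lt.mpr hku)
      · exact Int.le_floor.mpr hkv.le
    have hck : e * (y - (-(g0*(k:ℝ)) - a)/e) = g0*(k:ℝ) + a + e*y := by
      field_simp
      ring
    have habs' : |e * (y - (-(g0*(k:ℝ)) - a)/e)| < β := by
      rw [hck, hadef]; exact habs
    rw [abs_mul, heD] at habs'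
    have hyd : |y - (-(g0*(k:ℝ)) - a)/e| < β / D := by
      rw [lt_div_iff₀ hD0, mul_comm]; exact habs'
    obtain ⟨hy1, hy2⟩ := abs_lt.mp hyd
    exact Set.mem_biUnion hkK ⟨by linarith, by linarith⟩
  -- counting
  have hQ1 : (1:ℝ) ≤ (Q0:ℝ) := by exact_mod_cast hQ0
  have hcard : (Kx.card : ℝ) ≤ 2*(Q0:ℝ)+1 ∧ (Kx.card : ℝ) ≤ 3*D+3 := by
    have hfv : ((⌊v⌋:ℤ):ℝ) ≤ v := Int.floor_le v
    have hfu : u < ((⌊u⌋:ℤ):ℝ) + 1 := Int.lt_floor_add_one u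
    rcases le_or_gt (max (-(Q0:ℤ)) (⌊u⌋+1)) (min (Q0:ℤ) ⌊v⌋) with h | h
    · have h1 : Kx.card = (min (Q0:ℤ) ⌊v⌋ + 1 - max (-(Q0:ℤ)) (⌊u⌋+1)).toNat := by
        rw [hKdef, Int.card_Icc]
      have h2 : (Kx.card : ℝ)
          = ((min (Q0:ℤ) ⌊v⌋ : ℤ):ℝ) + 1 - ((max (-(Q0:ℤ)) (⌊u⌋+1) : ℤ):ℝ) := by
        rw [h1]
        rw [show ((min (Q0:ℤ) ⌊v⌋ + 1 - max (-(Q0:ℤ)) (⌊u⌋+1)).toNat : ℝ)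
            = ((min (Q0:ℤ) ⌊v⌋ + 1 - max (-(Q0:ℤ)) (⌊u⌋+1) : ℤ) : ℝ) from by
          exact_mod_cast congrArg (Int.cast : ℤ → ℝ) (Int.toNat_of_nonneg (by omega))]
        push_cast
        ring
      have hb1 : ((min (Q0:ℤ) ⌊v⌋ : ℤ):ℝ) ≤ (Q0:ℝ) := by exact_mod_cast min_le_left _ _
      have hb2 : ((min (Q0:ℤ) ⌊v⌋ : ℤ):ℝ) ≤ ((⌊v⌋:ℤ):ℝ) := by exact_mod_cast min_le_right _ _
      have ha1 : (-(Q0:ℝ)) ≤ ((max (-(Q0:ℤ)) (⌊u⌋+1) : ℤ):ℝ) := by exact_mod_cast le_max_left _ _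
      have ha2 : ((⌊u⌋:ℤ):ℝ) + 1 ≤ ((max (-(Q0:ℤ)) (⌊u⌋+1) : ℤ):ℝ) := by exact_mod_cast le_max_right _ _
      constructor
      · rw [h2]; linarith
      · rw [h2]; linarith
    · have : Kx = ∅ := by rw [hKdef]; exact Finset.Icc_eq_empty (by omega)
      rw [this]
      simp
      constructor <;> linarith
  calc volume (⋃ k ∈ Finset.Icc (-(Q0:ℤ)) (Q0:ℤ),
        {y : ℝ | x ∈ Set.Ioc (1:ℝ) 4 ∧ y ∈ Set.Ioc (1:ℝ) 4 ∧
          |g0 * (k:ℝ) + (A1:ℝ) * x * (q1:ℝ) + (A2:ℝ) * y * (q2:ℝ)| < β})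
      ≤ volume (⋃ k ∈ Kx, Set.Ioo ((-(g0*(k:ℝ)) - a)/e - β/D) ((-(g0*(k:ℝ)) - a)/e + β/D)) :=
        measure_mono hsub
    _ ≤ ∑ k ∈ Kx, volume (Set.Ioo ((-(g0*(k:ℝ)) - a)/e - β/D) ((-(g0*(k:ℝ)) - a)/e + β/D)) :=
        measure_biUnion_finset_le _ _
    _ = Kx.card • ENNReal.ofReal (2*β/D) := by
        rw [Finset.sum_congr rfl (fun k _ => ?_), Finset.sum_const]
        rw [Real.volume_Ioo]
        congr 1
        ring
    _ ≤ ENNReal.ofReal (14 * β * min ((Q0 : ℝ) / ((A2 : ℝ) * |(q2 : ℝ)|)) 1) := by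
        rw [← hDdef, nsmul_eq_mul, ← ENNReal.ofReal_natCast, ← ENNReal.ofReal_mul (by positivity)]
        apply ENNReal.ofReal_le_ofReal
        rcases le_total ((Q0:ℝ)/D) 1 with h | h
        · rw [min_eq_left h]
          calc (Kx.card:ℝ) * (2*β/D) = ((Kx.card:ℝ) * (2*β))/D := by ring
            _ ≤ (14*β*(Q0:ℝ))/D := by
                apply div_le_div_of_nonneg_right ?_ hD0.le |>.trans_eq rfl
                nlinarith [hcard.1]
            _ = 14*β*((Q0:ℝ)/D) := by ring
        · rw [min_eq_right h]
          calc (Kx.card:ℝ) * (2*β/D) = ((Kx.card:ℝ) * (2*β))/D := by ring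
            _ ≤ (12*D*β)/D := by
                apply div_le_div_of_nonneg_right ?_ hD0.le |>.trans_eq rfl
                nlinarith [hcard.2]
            _ = 12*β := by field_simp
            _ ≤ 14*β*1 := by linarith

/-- the strip-counting estimate used in the proof of the paper's
extension of Groshev's theorem (Lemma 6). -/
theorem stmt_1 (g0 : ℝ) (hg0 : g0 ∈ Set.Ioc (1:ℝ) 4)
    (β : ℝ) (hβ : β ∈ Set.Ioc (0:ℝ) 1)
    (A1 A2 Q0 : ℕ) (hA1 : 0 < A1) (hA2 : 0 < A2) (hQ0 : 0 < Q0)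
    (q1 q2 : ℤ) (hq2 : q2 ≠ 0) (hq : (A1 : ℤ) * |q1| ≤ (A2 : ℤ) * |q2|) :
    volume {g : ℝ × ℝ | g.1 ∈ Set.Ioc (1:ℝ) 4 ∧ g.2 ∈ Set.Ioc (1:ℝ) 4 ∧
        ∃ q0 : ℤ, |q0| ≤ (Q0 : ℤ) ∧
          |g0 * (q0 : ℝ) + (A1 : ℝ) * g.1 * (q1 : ℝ) + (A2 : ℝ) * g.2 * (q2 : ℝ)| < β}
      ≤ ENNReal.ofReal (42 * β * min ((Q0 : ℝ) / ((A2 : ℝ) * |(q2 : ℝ)|)) 1) := by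
  obtain ⟨hg0l, hg0r⟩ := hg0
  obtain ⟨hβ0, hβ1⟩ := hβ
  set U : Set (ℝ × ℝ) := ⋃ k ∈ Finset.Icc (-(Q0:ℤ)) (Q0:ℤ),
      {p : ℝ × ℝ | p.1 ∈ Set.Ioc (1:ℝ) 4 ∧ p.2 ∈ Set.Ioc (1:ℝ) 4 ∧
        |g0 * (k:ℝ) + (A1:ℝ) * p.1 * (q1:ℝ) + (A2:ℝ) * p.2 * (q2:ℝ)| < β} with hUdef
  have hSU : {g : ℝ × ℝ | g.1 ∈ Set.Ioc (1:ℝ) 4 ∧ g.2 ∈ Set.Ioc (1:ℝ) 4 ∧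
        ∃ q0 : ℤ, |q0| ≤ (Q0 : ℤ) ∧
          |g0 * (q0 : ℝ) + (A1 : ℝ) * g.1 * (q1 : ℝ) + (A2 : ℝ) * g.2 * (q2 : ℝ)| < β} ⊆ U := by
    rintro ⟨x, y⟩ ⟨hx, hy, q0, hq0, habs⟩
    have : q0 ∈ Finset.Icc (-(Q0:ℤ)) (Q0:ℤ) := by
      rw [Finset.mem_Icc]
      constructor <;> [linarith [neg_abs_le q0]; linarith [le_abs_self q0]]
    exact Set.mem_biUnion this ⟨hx, hy, habs⟩
  have hUm : MeasurableSet U := by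
    apply MeasurableSet.biUnion (Finset.Icc (-(Q0:ℤ)) (Q0:ℤ)).countable_toSet
    intro k _
    have h1 : MeasurableSet {p : ℝ × ℝ | p.1 ∈ Set.Ioc (1:ℝ) 4} :=
      measurable_fst measurableSet_Ioc
    have h2 : MeasurableSet {p : ℝ × ℝ | p.2 ∈ Set.Ioc (1:ℝ) 4} :=
      measurable_snd measurableSet_Ioc
    have h3 : MeasurableSet {p : ℝ × ℝ |
        |g0 * (k:ℝ) + (A1:ℝ) * p.1 * (q1:ℝ) + (A2:ℝ) * p.2 * (q2:ℝ)| < β} := by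
      have hc : Measurable fun p : ℝ × ℝ =>
          |g0 * (k:ℝ) + (A1:ℝ) * p.1 * (q1:ℝ) + (A2:ℝ) * p.2 * (q2:ℝ)| := by
        fun_prop
      exact measurableSet_lt hc measurable_const
    exact (h1.inter (h2.inter h3)).congr (by ext p; simp [and_assoc]) |>.congr rfl
  refine (measure_mono hSU).trans ?_
  rw [MeasureTheory.Measure.volume_eq_prod, Measure.prod_apply hUm]
  have key : ∀ xx : ℝ, volume (Prod.mk xx ⁻¹' U)
      ≤ (Set.Ioc (1:ℝ) 4).indicator
          (fun _ => ENNReal.ofReal (14 * β * min ((Q0 : ℝ) / ((A2 : ℝ) * |(q2 : ℝ)|)) 1)) xx := by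
    intro xx
    have hpre : Prod.mk xx ⁻¹' U = ⋃ k ∈ Finset.Icc (-(Q0:ℤ)) (Q0:ℤ),
        {y : ℝ | xx ∈ Set.Ioc (1:ℝ) 4 ∧ y ∈ Set.Ioc (1:ℝ) 4 ∧
          |g0 * (k:ℝ) + (A1:ℝ) * xx * (q1:ℝ) + (A2:ℝ) * y * (q2:ℝ)| < β} := by
      rw [hUdef]
      ext y
      simp
    rw [hpre]
    by_cases hxx : xx ∈ Set.Ioc (1:ℝ) 4
    · rw [Set.indicator_of_mem hxx]
      exact slice_bd g0 β hg0l hβ0 hβ1 A1 A2 Q0 hA2 hQ0 q1 q2 hq2 xx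
    · rw [Set.indicator_of_notMem hxx]
      have : (⋃ k ∈ Finset.Icc (-(Q0:ℤ)) (Q0:ℤ),
          {y : ℝ | xx ∈ Set.Ioc (1:ℝ) 4 ∧ y ∈ Set.Ioc (1:ℝ) 4 ∧
            |g0 * (k:ℝ) + (A1:ℝ) * xx * (q1:ℝ) + (A2:ℝ) * y * (q2:ℝ)| < β}) = ∅ := by
        ext y
        simp only [Set.mem_iUnion, Set.mem_setOf_eq, Set.mem_empty_iff_false, iff_false]
        rintro ⟨k, _, hmem⟩
        exact hxx hmem.1
      rw [this, measure_empty]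
  calc ∫⁻ xx, volume (Prod.mk xx ⁻¹' U)
      ≤ ∫⁻ xx, (Set.Ioc (1:ℝ) 4).indicator
          (fun _ => ENNReal.ofReal (14 * β * min ((Q0 : ℝ) / ((A2 : ℝ) * |(q2 : ℝ)|)) 1)) xx :=
        lintegral_mono key
    _ = ENNReal.ofReal (14 * β * min ((Q0 : ℝ) / ((A2 : ℝ) * |(q2 : ℝ)|)) 1)
        * volume (Set.Ioc (1:ℝ) 4) := by
        rw [lintegral_indicator measurableSet_Ioc, setLIntegral_const]
    _ ≤ ENNReal.ofReal (42 * β * min ((Q0 : ℝ) / ((A2 : ℝ) * |(q2 : ℝ)|)) 1) := by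
        rw [Real.volume_Ioc]
        have hmin : 0 ≤ min ((Q0 : ℝ) / ((A2 : ℝ) * |(q2 : ℝ)|)) 1 := by
          apply le_min _ zero_le_one
          positivity
        rw [← ENNReal.ofReal_mul (by positivity)]
        apply ENNReal.ofReal_le_ofReal
        nlinarith [hβ0.le, hmin]
end

section
/- Let β ∈ (0,1] and let A0, A2, Q0, Q1, Q2 be positive integers. Let B′ be the union over all integer triples (q0,q1,q2) ≠ (0,0,0) with |q0| ≤ Q0, |q1| ≤ Q1, |q2| ≤ Q2 of the sets {(g0,g1,g2) ∈ (1,4]³ : |A0·g0·q0 + g1·q1 + A2·g2·q2| < β}. Then μ(B′) ≤ 3024·β·Q0·Q2. -/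
/-!
Group the triples `(q₀, q₁, q₂)` by the pair `(q₀, q₂)`, of which there are at most `9 Q₀ Q₂`.
For a fixed pair, the triple with `q₁ = 0` gives a slab `|A₀ q₀ g₀ + A₂ q₂ g₂| < β` in which the
coefficient of `g₀` or of `g₂` is at least `1` in absolute value; slicing along that coordinate
bounds its volume by `9 · 2β`. For `q₁ ≠ 0`, fix `g₀, g₂` and slice along `g₁`: the `g₁ ∈ (1, 4]`
with `|q₁ g₁ + c| < β` for some integer `q₁ ≠ 0` lie in intervals of length `2β / |q₁|`, and only
the `O(|c|)` integers with `|q₁| ≍ |c|` contribute, for a total length `≤ 30β` independent of `Q₁`.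
Each pair thus contributes at most `18β + 9 · 30β = 288β`.
-/

open MeasureTheory Set

namespace MeasureTheory

variable {α β γ : Type*} [MeasurableSpace α] [MeasurableSpace β] [MeasurableSpace γ]
  {μ : Measure α} {ν : Measure β} {ρ : Measure γ} {k : ENNReal}

theorem lintegral_le_mul_measure_of_support_subset {f : α → ENNReal} {A : Set α}
    (hfA : Function.support f ⊆ A) (hf : ∀ x, f x ≤ k) : ∫⁻ x, f x ∂μ ≤ k * μ A :=
  calc ∫⁻ x, f x ∂μ = ∫⁻ x in A, f x ∂μ := (setLIntegral_eq_of_support_subset hfA).symm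
    _ ≤ ∫⁻ _ in A, k ∂μ := lintegral_mono hf
    _ = k * μ A := setLIntegral_const A k

namespace Measure

theorem prod_apply_le_mul_of_subset_prod_univ {s : Set (α × β)} {A : Set α}
    (hs : MeasurableSet s) (hsA : s ⊆ A ×ˢ univ) (hk : ∀ x, ν (Prod.mk x ⁻¹' s) ≤ k) :
    μ.prod ν s ≤ k * μ A :=
  (prod_apply_le hs).trans <| lintegral_le_mul_measure_of_support_subset
    (Function.support_subset_iff'.2 fun _ hx =>
      measure_mono_null (fun _ hy => absurd (hsA hy).1 hx) measure_empty) hk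

theorem prod_apply_le_mul_of_subset_univ_prod [SFinite μ] [SFinite ν] {s : Set (α × β)}
    {B : Set β} (hs : MeasurableSet s) (hsB : s ⊆ univ ×ˢ B)
    (hk : ∀ y, μ ((·, y) ⁻¹' s) ≤ k) :
    μ.prod ν s ≤ k * ν B := by
  rw [prod_apply_symm hs]
  exact lintegral_le_mul_measure_of_support_subset
    (Function.support_subset_iff'.2 fun _ hy =>
      measure_mono_null (fun _ hx => absurd (hsB hx).2 hy) measure_empty) hk

variable {S : Set (α × β × γ)}

theorem prod_prod_apply_le_of_fst_slice_le [SFinite μ] [SFinite ν] [SFinite ρ]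
    {B : Set β} {C : Set γ} (hS : MeasurableSet S) (hSBC : S ⊆ univ ×ˢ B ×ˢ C)
    (hk : ∀ y z, μ {x | (x, y, z) ∈ S} ≤ k) : μ.prod (ν.prod ρ) S ≤ k * ν B * ρ C := by
  rw [mul_assoc, ← prod_prod]
  exact prod_apply_le_mul_of_subset_univ_prod hS hSBC fun p => hk p.1 p.2

theorem prod_prod_apply_le_of_snd_slice_le [SFinite ν] [SFinite ρ] {A : Set α} {C : Set γ}
    (hS : MeasurableSet S) (hSAC : S ⊆ A ×ˢ univ ×ˢ C)
    (hk : ∀ x z, ν {y | (x, y, z) ∈ S} ≤ k) : μ.prod (ν.prod ρ) S ≤ k * μ A * ρ C := by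
  rw [mul_right_comm]
  refine prod_apply_le_mul_of_subset_prod_univ hS (fun g hg => ⟨(hSAC hg).1, trivial⟩) fun x => ?_
  exact prod_apply_le_mul_of_subset_univ_prod (measurable_prodMk_left hS)
    (fun p hp => ⟨trivial, (hSAC hp).2.2⟩) (hk x)

theorem prod_prod_apply_le_of_thd_slice_le {A : Set α} {B : Set β}
    (hS : MeasurableSet S) (hSAB : S ⊆ A ×ˢ B ×ˢ univ)
    (hk : ∀ x y, ρ {z | (x, y, z) ∈ S} ≤ k) : μ.prod (ν.prod ρ) S ≤ k * μ A * ν B := by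
  rw [mul_right_comm]
  refine prod_apply_le_mul_of_subset_prod_univ hS (fun g hg => ⟨(hSAB hg).1, trivial⟩) fun x => ?_
  exact prod_apply_le_mul_of_subset_prod_univ (measurable_prodMk_left hS)
    (fun p hp => ⟨(hSAB hp).2.1, trivial⟩) (hk x)

end Measure

end MeasureTheory

theorem Real.volume_setOf_abs_mul_add_lt (a c β : ℝ) (ha : a ≠ 0) :
    volume {x : ℝ | |a * x + c| < β} = ENNReal.ofReal (2 * β / |a|) := by
  have : {x : ℝ | |a * x + c| < β} = (a * ·) ⁻¹' Ioo (-β - c) (β - c) := by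
    ext x
    simp only [mem_preimage, mem_Ioo, abs_lt, sub_lt_iff_lt_add, lt_sub_iff_add_lt]
    rfl
  rw [this, Real.volume_preimage_mul_left ha, Real.volume_Ioo, ← ENNReal.ofReal_mul (abs_nonneg _),
    abs_inv]
  congr 1
  ring

theorem volume_setOf_exists_intCast_mul_add_lt_le (c β : ℝ) (hβ₀ : 0 ≤ β) (hβ₁ : β ≤ 1) :
    volume {y ∈ Ioc (1 : ℝ) 4 | ∃ q : ℤ, q ≠ 0 ∧ |q * y + c| < β}
      ≤ ENNReal.ofReal (30 * β) := by
  set M := ⌈|c| + 1⌉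
  let J : ℤ → Set ℝ := fun q => {y ∈ Ioc (1 : ℝ) 4 | |q * y + c| < β}
  let F := {q ∈ Finset.Icc (-M) M | q ≠ 0}
  have hbounds : ∀ (q : ℤ), ∀ y ∈ J q, |(q : ℝ)| < |c| + 1 ∧ |c| - 1 < 4 * |(q : ℝ)| := by
    rintro q y ⟨⟨hy₁, hy₄⟩, hlt⟩
    have hqy : |q * y| = |(q : ℝ)| * y := by rw [abs_mul, abs_of_pos (by linarith : (0 : ℝ) < y)]
    have h₁ := abs_sub (q * y + c) c
    have h₂ := abs_sub (q * y + c) (q * y)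
    rw [add_sub_cancel_right, hqy] at h₁
    rw [add_sub_cancel_left, hqy] at h₂
    constructor <;> nlinarith [abs_nonneg (q : ℝ)]
  have hcover : {y ∈ Ioc (1 : ℝ) 4 | ∃ q : ℤ, q ≠ 0 ∧ |q * y + c| < β} ⊆ ⋃ q ∈ F, J q := by
    rintro y ⟨hy, q, hq, hlt⟩
    refine mem_biUnion (Finset.mem_filter.2 ⟨Finset.mem_Icc.2 (abs_le.1 ?_), hq⟩) ⟨hy, hlt⟩
    have : (|q| : ℝ) ≤ M := by
      linarith [(hbounds q y ⟨hy, hlt⟩).1, Int.le_ceil (|c| + 1)]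
    exact_mod_cast this
  -- `|q| ≥ 1` and `4 |q| > |c| - 1` combine to `15 |q| ≥ 2 |c| + 5`, and `2 |c| + 5` bounds `#F`.
  have hJ : ∀ q ∈ F, volume (J q) ≤ ENNReal.ofReal (30 * β / (2 * |c| + 5)) := by
    intro q hq
    have hq₀ : q ≠ 0 := (Finset.mem_filter.1 hq).2
    rcases (J q).eq_empty_or_nonempty with he | ⟨y, hy⟩
    · simp [he]
    have hq₁ : (1 : ℝ) ≤ |(q : ℝ)| := by exact_mod_cast Int.one_le_abs hq₀
    have hc := (hbounds q y hy).2
    calc volume (J q) ≤ volume {y : ℝ | |q * y + c| < β} := measure_mono fun y hy => hy.2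
      _ = ENNReal.ofReal (2 * β / |(q : ℝ)|) :=
        Real.volume_setOf_abs_mul_add_lt _ _ _ (Int.cast_ne_zero.2 hq₀)
      _ ≤ ENNReal.ofReal (30 * β / (2 * |c| + 5)) := by
        refine ENNReal.ofReal_le_ofReal ?_
        rw [div_le_div_iff₀ (by linarith) (by positivity)]
        nlinarith
  have hF : (F.card : ℝ) ≤ 2 * |c| + 5 := by
    have hcard : F.card ≤ 2 * M + 1 := by
      have : F.card ≤ (Finset.Icc (-M) M).card := Finset.card_filter_le _ _
      rw [Int.card_Icc] at this
      have : 0 ≤ M := Int.ceil_nonneg (by positivity)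
      omega
    have : (F.card : ℝ) ≤ 2 * M + 1 := by exact_mod_cast hcard
    linarith [Int.ceil_lt_add_one (|c| + 1)]
  calc volume _ ≤ volume (⋃ q ∈ F, J q) := measure_mono hcover
    _ ≤ ∑ q ∈ F, volume (J q) := measure_biUnion_finset_le F J
    _ ≤ F.card * ENNReal.ofReal (30 * β / (2 * |c| + 5)) := by
      rw [← nsmul_eq_mul]; exact Finset.sum_le_card_nsmul F _ _ hJ
    _ ≤ ENNReal.ofReal (30 * β) := by
      rw [← ENNReal.ofReal_natCast, ← ENNReal.ofReal_mul (by positivity)]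
      refine ENNReal.ofReal_le_ofReal ?_
      calc F.card * (30 * β / (2 * |c| + 5))
          ≤ (2 * |c| + 5) * (30 * β / (2 * |c| + 5)) := by gcongr
        _ = 30 * β := mul_div_cancel₀ _ (by positivity)

theorem one_le_abs_natCast_mul_intCast {n : ℕ} {m : ℤ} (hn : 0 < n) (hm : m ≠ 0) :
    1 ≤ |(n : ℝ) * m| := by
  exact_mod_cast Int.one_le_abs (mul_ne_zero (Int.natCast_ne_zero.2 hn.ne') hm)

theorem ofReal_mul_volume_Ioc_one_four_mul_volume_Ioc_one_four (t : ℝ) :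
    ENNReal.ofReal t * volume (Ioc (1 : ℝ) 4) * volume (Ioc (1 : ℝ) 4)
      = ENNReal.ofReal (9 * t) := by
  rw [Real.volume_Ioc, show (9 : ℝ) = (4 - 1) * (4 - 1) by norm_num,
    ENNReal.ofReal_mul (by norm_num), ENNReal.ofReal_mul (by norm_num)]
  ring

def cubeSlab (u v w β : ℝ) : Set (ℝ × ℝ × ℝ) :=
  {g | g ∈ Ioc 1 4 ×ˢ Ioc 1 4 ×ˢ Ioc 1 4 ∧ |u * g.1 + v * g.2.1 + w * g.2.2| < β}

section cubeSlab

variable {u v w β : ℝ}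

theorem measurableSet_cubeSlab : MeasurableSet (cubeSlab u v w β) := by
  unfold cubeSlab
  measurability

theorem volume_cubeSlab_le_of_fst_ne_zero (hu : u ≠ 0) :
    volume (cubeSlab u v w β) ≤ ENNReal.ofReal (18 * β / |u|) := by
  calc volume (cubeSlab u v w β)
      ≤ ENNReal.ofReal (2 * β / |u|) * volume (Ioc (1 : ℝ) 4) * volume (Ioc (1 : ℝ) 4) := by
        refine Measure.prod_prod_apply_le_of_fst_slice_le measurableSet_cubeSlab
          (fun g hg => ⟨trivial, hg.1.2⟩) fun y z => ?_
        rw [← Real.volume_setOf_abs_mul_add_lt u (v * y + w * z) β hu]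
        exact measure_mono fun x hx => show |u * x + (v * y + w * z)| < β by
          rw [← add_assoc]; exact hx.2
    _ = ENNReal.ofReal (18 * β / |u|) := by
        rw [ofReal_mul_volume_Ioc_one_four_mul_volume_Ioc_one_four]; ring_nf

theorem volume_cubeSlab_le_of_thd_ne_zero (hw : w ≠ 0) :
    volume (cubeSlab u v w β) ≤ ENNReal.ofReal (18 * β / |w|) := by
  calc volume (cubeSlab u v w β)
      ≤ ENNReal.ofReal (2 * β / |w|) * volume (Ioc (1 : ℝ) 4) * volume (Ioc (1 : ℝ) 4) := by
        refine Measure.prod_prod_apply_le_of_thd_slice_le measurableSet_cubeSlab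
          (fun g hg => ⟨hg.1.1, hg.1.2.1, trivial⟩) fun x y => ?_
        rw [← Real.volume_setOf_abs_mul_add_lt w (u * x + v * y) β hw]
        exact measure_mono fun z hz => show |w * z + (u * x + v * y)| < β by
          rw [add_comm]; exact hz.2
    _ = ENNReal.ofReal (18 * β / |w|) := by
        rw [ofReal_mul_volume_Ioc_one_four_mul_volume_Ioc_one_four]; ring_nf

theorem volume_cubeSlab_le_of_one_le_abs (hβ : 0 ≤ β) (h : 1 ≤ |u| ∨ 1 ≤ |w|) :
    volume (cubeSlab u v w β) ≤ ENNReal.ofReal (18 * β) := by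
  rcases h with hu | hw
  · exact (volume_cubeSlab_le_of_fst_ne_zero (abs_pos.1 (by linarith))).trans
      (ENNReal.ofReal_le_ofReal (div_le_self (by positivity) hu))
  · exact (volume_cubeSlab_le_of_thd_ne_zero (abs_pos.1 (by linarith))).trans
      (ENNReal.ofReal_le_ofReal (div_le_self (by positivity) hw))

theorem volume_iUnion_cubeSlab_le (hβ₀ : 0 ≤ β) (hβ₁ : β ≤ 1) :
    volume (⋃ (q : ℤ) (_ : q ≠ 0), cubeSlab u q w β) ≤ ENNReal.ofReal (270 * β) := by
  calc volume (⋃ (q : ℤ) (_ : q ≠ 0), cubeSlab u q w β)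
      ≤ ENNReal.ofReal (30 * β) * volume (Ioc (1 : ℝ) 4) * volume (Ioc (1 : ℝ) 4) := by
        refine Measure.prod_prod_apply_le_of_snd_slice_le
          (MeasurableSet.iUnion fun _ => MeasurableSet.iUnion fun _ => measurableSet_cubeSlab)
          (fun g hg => ?_) fun x z => ?_
        · obtain ⟨_, _, hg⟩ := mem_iUnion₂.1 hg
          exact ⟨hg.1.1, trivial, hg.1.2.2⟩
        · refine (measure_mono fun y hy => ?_).trans
            (volume_setOf_exists_intCast_mul_add_lt_le (u * x + w * z) β hβ₀ hβ₁)
          obtain ⟨q, hq, hy⟩ := mem_iUnion₂.1 hy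
          exact ⟨hy.1.2.1, q, hq, by convert hy.2 using 2; ring⟩
    _ = ENNReal.ofReal (270 * β) := by
        rw [ofReal_mul_volume_Ioc_one_four_mul_volume_Ioc_one_four]; ring_nf

theorem volume_iUnion_cubeSlab_natCast_mul_le {A₀ A₂ : ℕ} (hA₀ : 0 < A₀) (hA₂ : 0 < A₂)
    (a b : ℤ) (hβ₀ : 0 ≤ β) (hβ₁ : β ≤ 1) :
    volume (⋃ (q : ℤ) (_ : (a, q, b) ≠ (0, 0, 0)), cubeSlab (A₀ * a) q (A₂ * b) β)
      ≤ ENNReal.ofReal (288 * β) := by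
  set T := ⋃ (q : ℤ) (_ : q ≠ 0), cubeSlab (A₀ * a) q (A₂ * b) β
  have hT : volume T ≤ ENNReal.ofReal (270 * β) := volume_iUnion_cubeSlab_le hβ₀ hβ₁
  by_cases hab : a = 0 ∧ b = 0
  · obtain ⟨rfl, rfl⟩ := hab
    refine (measure_mono ?_).trans (hT.trans (ENNReal.ofReal_le_ofReal (by linarith)))
    exact iUnion₂_subset fun q hq => subset_iUnion₂_of_subset q (by simpa using hq) subset_rfl
  have hZ : volume (cubeSlab (A₀ * a) 0 (A₂ * b) β) ≤ ENNReal.ofReal (18 * β) :=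
    volume_cubeSlab_le_of_one_le_abs hβ₀ <| (not_and_or.1 hab).imp
      (one_le_abs_natCast_mul_intCast hA₀) (one_le_abs_natCast_mul_intCast hA₂)
  calc volume _ ≤ volume (cubeSlab (A₀ * a) 0 (A₂ * b) β ∪ T) := by
        refine measure_mono (iUnion₂_subset fun q _ => ?_)
        rcases eq_or_ne q 0 with rfl | hq
        · rw [Int.cast_zero]; exact subset_union_left
        · exact fun g hg => Or.inr (mem_iUnion₂.2 ⟨q, hq, hg⟩)
    _ ≤ ENNReal.ofReal (18 * β) + ENNReal.ofReal (270 * β) :=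
        (measure_union_le _ _).trans (add_le_add hZ hT)
    _ = ENNReal.ofReal (288 * β) := by
        rw [← ENNReal.ofReal_add (by positivity) (by positivity)]; ring_nf

end cubeSlab

theorem stmt_2_general (β : ℝ) (hβ : β ∈ Set.Ioc (0:ℝ) 1)
    (A0 A2 Q0 Q1 Q2 : ℕ) (hA0 : 0 < A0) (hA2 : 0 < A2)
    (hQ0 : 0 < Q0) (hQ2 : 0 < Q2) :
    volume (⋃ (q0 : ℤ) (q1 : ℤ) (q2 : ℤ) (_ : (q0, q1, q2) ≠ (0, 0, 0))
        (_ : |q0| ≤ (Q0 : ℤ)) (_ : |q1| ≤ (Q1 : ℤ)) (_ : |q2| ≤ (Q2 : ℤ)),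
        {g : ℝ × ℝ × ℝ |
          g.1 ∈ Set.Ioc (1:ℝ) 4 ∧ g.2.1 ∈ Set.Ioc (1:ℝ) 4 ∧ g.2.2 ∈ Set.Ioc (1:ℝ) 4 ∧
          |(A0 : ℝ) * g.1 * (q0 : ℝ) + g.2.1 * (q1 : ℝ) + (A2 : ℝ) * g.2.2 * (q2 : ℝ)| < β})
      ≤ ENNReal.ofReal (3024 * β * (Q0 : ℝ) * (Q2 : ℝ)) := by
  obtain ⟨hβ₀, hβ₁⟩ := hβ
  let P := Finset.Icc (-(Q0 : ℤ)) Q0 ×ˢ Finset.Icc (-(Q2 : ℤ)) Q2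
  have hP : (P.card : ℝ) ≤ 9 * Q0 * Q2 := by
    have : P.card = (2 * Q0 + 1) * (2 * Q2 + 1) := by
      rw [Finset.card_product, Int.card_Icc, Int.card_Icc,
        show ((Q0 : ℤ) + 1 - -Q0).toNat = 2 * Q0 + 1 by omega,
        show ((Q2 : ℤ) + 1 - -Q2).toNat = 2 * Q2 + 1 by omega]
    have : P.card ≤ 9 * Q0 * Q2 := by rw [this]; nlinarith
    exact_mod_cast this
  let L : ℤ × ℤ → Set (ℝ × ℝ × ℝ) := fun p =>
    ⋃ (q : ℤ) (_ : (p.1, q, p.2) ≠ (0, 0, 0)), cubeSlab (A0 * p.1) q (A2 * p.2) β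
  calc volume _ ≤ ∑ p ∈ P, volume (L p) := by
        refine (measure_mono ?_).trans (measure_biUnion_finset_le P L)
        simp only [iUnion_subset_iff]
        rintro q0 q1 q2 hq h0 - h2 g ⟨hg0, hg1, hg2, hlt⟩
        refine mem_biUnion (x := (q0, q2)) (Finset.mem_product.2
          ⟨Finset.mem_Icc.2 (abs_le.1 h0), Finset.mem_Icc.2 (abs_le.1 h2)⟩) ?_
        exact mem_iUnion₂.2 ⟨q1, hq, ⟨hg0, hg1, hg2⟩, by convert hlt using 2; ring⟩
    _ ≤ P.card * ENNReal.ofReal (288 * β) := by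
      rw [← nsmul_eq_mul]
      exact Finset.sum_le_card_nsmul P _ _ fun p _ =>
        volume_iUnion_cubeSlab_natCast_mul_le hA0 hA2 p.1 p.2 hβ₀.le hβ₁
    _ ≤ ENNReal.ofReal (3024 * β * Q0 * Q2) := by
      rw [← ENNReal.ofReal_natCast, ← ENNReal.ofReal_mul (by positivity)]
      refine ENNReal.ofReal_le_ofReal ?_
      calc P.card * (288 * β) ≤ 9 * Q0 * Q2 * (288 * β) := by gcongr
        _ ≤ 3024 * β * Q0 * Q2 := by linarith [show 0 ≤ β * Q0 * Q2 by positivity]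

/-- measure bound from the proof of Lemma 5 of the paper
(case in which the middle scaling coefficient is the smallest). -/
theorem stmt_2 (β : ℝ) (hβ : β ∈ Set.Ioc (0:ℝ) 1)
    (A0 A2 Q0 Q1 Q2 : ℕ) (hA0 : 0 < A0) (hA2 : 0 < A2)
    (hQ0 : 0 < Q0) (hQ1 : 0 < Q1) (hQ2 : 0 < Q2) :
    volume (⋃ (q0 : ℤ) (q1 : ℤ) (q2 : ℤ) (_ : (q0, q1, q2) ≠ (0, 0, 0))
        (_ : |q0| ≤ (Q0 : ℤ)) (_ : |q1| ≤ (Q1 : ℤ)) (_ : |q2| ≤ (Q2 : ℤ)),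
        {g : ℝ × ℝ × ℝ |
          g.1 ∈ Set.Ioc (1:ℝ) 4 ∧ g.2.1 ∈ Set.Ioc (1:ℝ) 4 ∧ g.2.2 ∈ Set.Ioc (1:ℝ) 4 ∧
          |(A0 : ℝ) * g.1 * (q0 : ℝ) + g.2.1 * (q1 : ℝ) + (A2 : ℝ) * g.2.2 * (q2 : ℝ)| < β})
      ≤ ENNReal.ofReal (3024 * β * (Q0 : ℝ) * (Q2 : ℝ)) :=
  stmt_2_general β hβ A0 A2 Q0 Q1 Q2 hA0 hA2 hQ0 hQ2
end

section
/- Let β ∈ (0,1] and let A1, A2, Q0, Q1, Q2 be positive integers with A2·Q2 ≤ Q0. Let B′ be the union over all integer triples (q0,q1,q2) ≠ (0,0,0) with |q0| ≤ Q0, |q1| ≤ Q1, |q2| ≤ Q2 of the sets {(g0,g1,g2) ∈ (1,4]³ : |g0·q0 + A1·g1·q1 + A2·g2·q2| < β}. Then μ(B′) ≤ 6652·β·max{Q2, Q0·Q2/A1}. -/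
open MeasureTheory

open scoped ENNReal

namespace Stmt3Aux

lemma ball_sub (A : ℝ) (hA : 0 < A) (q : ℤ) (hq : q ≠ 0) (β c : ℝ) :
    {x : ℝ | x ∈ Set.Ioc (1:ℝ) 4 ∧ |A * (q:ℝ) * x + c| < β} ⊆
      Metric.ball (-c / (A * q)) (β / (A * |(q:ℝ)|)) := by
  intro x hx
  obtain ⟨hx1, habs⟩ := hx
  have hq0 : ((q:ℝ)) ≠ 0 := Int.cast_ne_zero.mpr hq
  have hqpos : (0:ℝ) < A * |(q:ℝ)| := by positivity
  rw [Metric.mem_ball, Real.dist_eq]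
  have h1 : x - -c / (A * q) = (A * (q:ℝ) * x + c) / (A * q) := by field_simp; ring
  rw [h1, abs_div, abs_mul, abs_of_pos hA]
  exact (div_lt_div_iff_of_pos_right hqpos).mpr habs
  
end Stmt3Aux

namespace Stmt3Aux

set_option maxHeartbeats 1000000 in
lemma keyone (A : ℝ) (hA : 1 ≤ A) (β c : ℝ) (hβ0 : 0 < β) (hβ1 : β ≤ 1) :
    volume {x : ℝ | x ∈ Set.Ioc (1:ℝ) 4 ∧ ∃ q : ℤ, q ≠ 0 ∧ |A * (q:ℝ) * x + c| < β}
      ≤ ENNReal.ofReal (24 * β / A) := by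
  have hA0 : (0:ℝ) < A := lt_of_lt_of_le one_pos hA
  set a : ℝ := (|c| - β) / (4 * A) with ha
  set b : ℝ := (|c| + β) / A with hb
  set n0 : ℤ := max 1 ⌈a⌉ with hn0
  set N : ℤ := max n0 ⌊b⌋ with hN
  have hn01 : (1:ℤ) ≤ n0 := le_max_left _ _
  have hn0R : (1:ℝ) ≤ (n0:ℝ) := by exact_mod_cast hn01
  have hn0a : a ≤ (n0:ℝ) := le_trans (Int.le_ceil a) (by exact_mod_cast le_max_right 1 ⌈a⌉)
  have hNn0 : n0 ≤ N := le_max_left _ _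
  -- key count bound
  have hcount : ((N:ℝ) - n0 + 1) ≤ 6 * (n0:ℝ) := by
    rcases le_or_gt ⌊b⌋ n0 with h | h
    · have : N = n0 := by rw [hN, max_eq_left h]
      rw [this]; nlinarith
    · have hNb : (N:ℝ) ≤ b := by
        have : N = ⌊b⌋ := by rw [hN, max_eq_right h.le]
        rw [this]; exact Int.floor_le b
      -- b + 1 ≤ 7 * n0
      have hβA : β / A ≤ 1 := by
        rw [div_le_one hA0]; linarith
      have hbb : b = 4 * a + 2 * (β / A) := by
        rw [ha, hb]; field_simp; ring
      rcases le_or_gt a 1 with hc | hc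
      · have : b ≤ 6 := by rw [hbb]; linarith
        nlinarith
      · have han0 : a ≤ (n0:ℝ) := hn0a
        have : b + 1 ≤ 7 * a := by rw [hbb]; nlinarith
        nlinarith
  -- the finite index set
  set F : Finset ℤ := Finset.Icc (-N) (-n0) ∪ Finset.Icc n0 N with hF
  -- inclusion
  have hsub : {x : ℝ | x ∈ Set.Ioc (1:ℝ) 4 ∧ ∃ q : ℤ, q ≠ 0 ∧ |A * (q:ℝ) * x + c| < β}
      ⊆ ⋃ q ∈ F, {x : ℝ | x ∈ Set.Ioc (1:ℝ) 4 ∧ |A * (q:ℝ) * x + c| < β} := by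
    rintro x ⟨hx, q, hq, habs⟩
    have hx1 : (1:ℝ) < x := hx.1
    have hx4 : x ≤ 4 := hx.2
    have hq1 : (1:ℝ) ≤ |(q:ℝ)| := by
      have : (1:ℤ) ≤ |q| := Int.one_le_abs hq
      calc (1:ℝ) ≤ ((|q|:ℤ):ℝ) := by exact_mod_cast this
        _ = |(q:ℝ)| := by rw [Int.cast_abs]
    have habs2 : |A * (q:ℝ) * x| = A * |(q:ℝ)| * x := by
      rw [abs_mul, abs_mul, abs_of_pos hA0, abs_of_pos (by linarith : (0:ℝ) < x)]
    have hup : A * |(q:ℝ)| < |c| + β := by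
      have h1 : |A * (q:ℝ) * x| ≤ |A * (q:ℝ) * x + c| + |c| := by
        calc |A * (q:ℝ) * x| = |(A * (q:ℝ) * x + c) + (-c)| := by ring_nf
          _ ≤ |A * (q:ℝ) * x + c| + |(-c)| := abs_add_le _ _
          _ = |A * (q:ℝ) * x + c| + |c| := by rw [abs_neg]
      have h2 : A * |(q:ℝ)| ≤ A * |(q:ℝ)| * x :=
        le_mul_of_one_le_right (by positivity) hx1.le
      rw [habs2] at h1; linarith
    have hlow : |c| - β < 4 * (A * |(q:ℝ)|) := by
      have h1 : |c| ≤ |A * (q:ℝ) * x + c| + |A * (q:ℝ) * x| := by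
        calc |c| = |(A * (q:ℝ) * x + c) + (-(A * (q:ℝ) * x))| := by ring_nf
          _ ≤ |A * (q:ℝ) * x + c| + |(-(A * (q:ℝ) * x))| := abs_add_le _ _
          _ = |A * (q:ℝ) * x + c| + |A * (q:ℝ) * x| := by rw [abs_neg]
      have h2 : A * |(q:ℝ)| * x ≤ A * |(q:ℝ)| * 4 :=
        mul_le_mul_of_nonneg_left hx4 (by positivity)
      rw [habs2] at h1; nlinarith
    have hqn0 : n0 ≤ |q| := by
      have haq : a ≤ (|q|:ℤ) := by
        rw [ha, div_le_iff₀ (by positivity : (0:ℝ) < 4 * A)]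
        rw [Int.cast_abs]; nlinarith
      have h1 : ⌈a⌉ ≤ |q| := Int.ceil_le.mpr haq
      have h2 : (1:ℤ) ≤ |q| := Int.one_le_abs hq
      exact max_le h2 h1
    have hqN : |q| ≤ N := by
      have : ((|q|:ℤ):ℝ) ≤ b := by
        rw [Int.cast_abs, hb, le_div_iff₀ hA0]; nlinarith
      have h1 : |q| ≤ ⌊b⌋ := Int.le_floor.mpr this
      exact le_trans h1 (le_max_right _ _)
    have hqF : q ∈ F := by
      rw [hF, Finset.mem_union, Finset.mem_Icc, Finset.mem_Icc]
      rcases lt_or_gt_of_ne hq with hneg | hpos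
      · left
        rw [abs_of_neg hneg] at hqn0 hqN
        omega
      · right
        rw [abs_of_pos hpos] at hqn0 hqN
        omega
    exact Set.mem_biUnion hqF ⟨hx, habs⟩
  refine le_trans (measure_mono hsub) ?_
  refine le_trans (measure_biUnion_finset_le F _) ?_
  have hper : ∀ q ∈ F, volume {x : ℝ | x ∈ Set.Ioc (1:ℝ) 4 ∧ |A * (q:ℝ) * x + c| < β}
      ≤ ENNReal.ofReal (2 * (β / (A * (n0:ℝ)))) := by
    intro q hqF
    rw [hF, Finset.mem_union, Finset.mem_Icc, Finset.mem_Icc] at hqF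
    have hq : q ≠ 0 := by rcases hqF with h | h <;> omega
    have hqn0 : (n0:ℝ) ≤ |(q:ℝ)| := by
      have : n0 ≤ |q| := by
        rcases hqF with h | h
        · rw [abs_of_neg (by omega : q < 0)]; omega
        · rw [abs_of_pos (by omega : 0 < q)]; omega
      calc (n0:ℝ) ≤ ((|q|:ℤ):ℝ) := by exact_mod_cast this
        _ = |(q:ℝ)| := by rw [Int.cast_abs]
    refine le_trans (measure_mono (ball_sub A hA0 q hq β c)) ?_
    rw [Real.volume_ball]
    apply ENNReal.ofReal_le_ofReal
    have h1 : (0:ℝ) < A * (n0:ℝ) := by positivity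
    have h2 : A * (n0:ℝ) ≤ A * |(q:ℝ)| := by nlinarith
    have h3 : β / (A * |(q:ℝ)|) ≤ β / (A * (n0:ℝ)) :=
      div_le_div_of_nonneg_left hβ0.le h1 h2
    linarith
  refine le_trans (Finset.sum_le_sum hper) ?_
  rw [Finset.sum_const, nsmul_eq_mul]
  have hcard : (F.card : ℝ) ≤ 2 * ((N:ℝ) - n0 + 1) := by
    have h1 : F.card ≤ (Finset.Icc (-N) (-n0)).card + (Finset.Icc n0 N).card :=
      Finset.card_union_le _ _
    rw [Int.card_Icc, Int.card_Icc] at h1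
    have h2 : ((-n0 + 1 - -N).toNat : ℤ) = N - n0 + 1 := by omega
    have h3 : ((N + 1 - n0).toNat : ℤ) = N - n0 + 1 := by omega
    have h4 : (F.card : ℤ) ≤ 2 * (N - n0 + 1) := by
      calc (F.card : ℤ) ≤ ((-n0 + 1 - -N).toNat : ℤ) + ((N + 1 - n0).toNat : ℤ) := by exact_mod_cast h1
        _ = 2 * (N - n0 + 1) := by omega
    calc (F.card : ℝ) = ((F.card : ℤ) : ℝ) := by norm_cast
      _ ≤ ((2 * (N - n0 + 1) : ℤ) : ℝ) := by exact_mod_cast h4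
      _ = 2 * ((N:ℝ) - n0 + 1) := by push_cast; ring
  calc (F.card : ℝ≥0∞) * ENNReal.ofReal (2 * (β / (A * (n0:ℝ))))
      = ENNReal.ofReal ((F.card : ℝ) * (2 * (β / (A * (n0:ℝ))))) := by
        rw [← ENNReal.ofReal_natCast F.card, ← ENNReal.ofReal_mul (by positivity)]
    _ ≤ ENNReal.ofReal (24 * β / A) := by
        apply ENNReal.ofReal_le_ofReal
        have h1 : (0:ℝ) < A * (n0:ℝ) := by positivity
        have h2 : (0:ℝ) ≤ 2 * (β / (A * (n0:ℝ))) := by positivity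
        have h3 : (F.card : ℝ) * (2 * (β / (A * (n0:ℝ))))
            ≤ (2 * ((N:ℝ) - n0 + 1)) * (2 * (β / (A * (n0:ℝ)))) :=
          mul_le_mul_of_nonneg_right hcard h2
        have h4 : (2 * ((N:ℝ) - n0 + 1)) * (2 * (β / (A * (n0:ℝ))))
            ≤ (2 * (6 * (n0:ℝ))) * (2 * (β / (A * (n0:ℝ)))) :=
          mul_le_mul_of_nonneg_right (by linarith) h2
        have h5 : (2 * (6 * (n0:ℝ))) * (2 * (β / (A * (n0:ℝ)))) = 24 * β / A := by
          field_simp; ring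
        linarith

end Stmt3Aux

namespace Stmt3Aux

lemma fub2 (s : Set (ℝ × ℝ)) (hs : MeasurableSet s) (C : ℝ≥0∞)
    (h1 : ∀ y : ℝ, volume {x : ℝ | (x, y) ∈ s} ≤ C)
    (h2 : ∀ p ∈ s, p.2 ∈ Set.Ioc (1:ℝ) 4) :
    volume s ≤ 3 * C := by
  rw [MeasureTheory.Measure.volume_eq_prod, Measure.prod_apply_symm hs]
  calc ∫⁻ y, volume ((fun x => (x, y)) ⁻¹' s)
      ≤ ∫⁻ y, (Set.Ioc (1:ℝ) 4).indicator (fun _ => C) y := by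
        apply lintegral_mono
        intro y
        by_cases hy : y ∈ Set.Ioc (1:ℝ) 4
        · rw [Set.indicator_of_mem hy]; exact h1 y
        · rw [Set.indicator_of_notMem hy]
          have : ((fun x => (x, y)) ⁻¹' s) = ∅ := by
            ext x
            simp only [Set.mem_preimage, Set.mem_empty_iff_false, iff_false]
            intro hmem
            exact hy (h2 _ hmem)
          simp [this]
    _ = C * volume (Set.Ioc (1:ℝ) 4) := lintegral_indicator_const measurableSet_Ioc C
    _ = 3 * C := by
        rw [Real.volume_Ioc]
        norm_num
        ring

lemma fub3mid (s : Set (ℝ × ℝ × ℝ)) (hs : MeasurableSet s) (C : ℝ≥0∞)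
    (h1 : ∀ x z : ℝ, volume {y : ℝ | (x, y, z) ∈ s} ≤ C)
    (h2 : ∀ p ∈ s, p.1 ∈ Set.Ioc (1:ℝ) 4 ∧ p.2.2 ∈ Set.Ioc (1:ℝ) 4) :
    volume s ≤ 9 * C := by
  rw [MeasureTheory.Measure.volume_eq_prod, Measure.prod_apply hs]
  calc ∫⁻ x, ((volume : Measure ℝ).prod volume) (Prod.mk x ⁻¹' s)
      ≤ ∫⁻ x, (Set.Ioc (1:ℝ) 4).indicator (fun _ => 3 * C) x := by
        apply lintegral_mono
        intro x
        by_cases hx : x ∈ Set.Ioc (1:ℝ) 4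
        · rw [Set.indicator_of_mem hx]
          rw [← MeasureTheory.Measure.volume_eq_prod]
          apply fub2
          · exact measurable_prodMk_left hs
          · intro y; exact h1 x y
          · intro p hp; exact (h2 (x, p) hp).2
        · rw [Set.indicator_of_notMem hx]
          have : (Prod.mk x ⁻¹' s) = ∅ := by
            ext p
            simp only [Set.mem_preimage, Set.mem_empty_iff_false, iff_false]
            intro hmem
            exact hx (h2 (x, p) hmem).1
          simp [this]
    _ = (3 * C) * volume (Set.Ioc (1:ℝ) 4) := lintegral_indicator_const measurableSet_Ioc _
    _ = 9 * C := by
        rw [Real.volume_Ioc]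
        norm_num
        ring

lemma fub3fst (s : Set (ℝ × ℝ × ℝ)) (hs : MeasurableSet s) (C : ℝ≥0∞)
    (h1 : ∀ y z : ℝ, volume {x : ℝ | (x, y, z) ∈ s} ≤ C)
    (h2 : ∀ p ∈ s, p.2.1 ∈ Set.Ioc (1:ℝ) 4 ∧ p.2.2 ∈ Set.Ioc (1:ℝ) 4) :
    volume s ≤ 9 * C := by
  rw [MeasureTheory.Measure.volume_eq_prod, Measure.prod_apply_symm hs]
  calc ∫⁻ (p : ℝ × ℝ), volume ((fun x => (x, p)) ⁻¹' s)
      ≤ ∫⁻ (p : ℝ × ℝ), ((Set.Ioc (1:ℝ) 4) ×ˢ (Set.Ioc (1:ℝ) 4)).indicator (fun _ => C) p := by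
        apply lintegral_mono
        intro p
        by_cases hp : p ∈ (Set.Ioc (1:ℝ) 4) ×ˢ (Set.Ioc (1:ℝ) 4)
        · rw [Set.indicator_of_mem hp]
          exact h1 p.1 p.2
        · rw [Set.indicator_of_notMem hp]
          have : ((fun x => (x, p)) ⁻¹' s) = ∅ := by
            ext x
            simp only [Set.mem_preimage, Set.mem_empty_iff_false, iff_false]
            intro hmem
            exact hp (Set.mem_prod.mpr (h2 (x, p) hmem))
          simp [this]
    _ = C * volume ((Set.Ioc (1:ℝ) 4) ×ˢ (Set.Ioc (1:ℝ) 4)) :=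
        lintegral_indicator_const (measurableSet_Ioc.prod measurableSet_Ioc) C
    _ = 9 * C := by
        rw [MeasureTheory.Measure.volume_eq_prod, Measure.prod_prod, Real.volume_Ioc]
        norm_num
        ring

end Stmt3Aux

namespace Stmt3Aux

def S1 (β : ℝ) (A1 A2 : ℕ) (q0 q1 q2 : ℤ) : Set (ℝ × ℝ × ℝ) :=
  {g : ℝ × ℝ × ℝ |
    g.1 ∈ Set.Ioc (1:ℝ) 4 ∧ g.2.1 ∈ Set.Ioc (1:ℝ) 4 ∧ g.2.2 ∈ Set.Ioc (1:ℝ) 4 ∧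
    |g.1 * (q0 : ℝ) + (A1 : ℝ) * g.2.1 * (q1 : ℝ) + (A2 : ℝ) * g.2.2 * (q2 : ℝ)| < β}

lemma measurable_S1 (β : ℝ) (A1 A2 : ℕ) (q0 q1 q2 : ℤ) : MeasurableSet (S1 β A1 A2 q0 q1 q2) := by
  unfold S1
  apply MeasurableSet.inter
  · exact measurable_fst measurableSet_Ioc
  apply MeasurableSet.inter
  · exact (measurable_fst.comp measurable_snd) measurableSet_Ioc
  apply MeasurableSet.inter
  · exact (measurable_snd.comp measurable_snd) measurableSet_Ioc
  · show MeasurableSet {g : ℝ × ℝ × ℝ |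
      |g.1 * (q0 : ℝ) + (A1 : ℝ) * g.2.1 * (q1 : ℝ) + (A2 : ℝ) * g.2.2 * (q2 : ℝ)| < β}
    exact measurableSet_lt (Measurable.abs (by fun_prop)) measurable_const

def T1 (β : ℝ) (A1 A2 : ℕ) (q0 q2 : ℤ) : Set (ℝ × ℝ × ℝ) :=
  ⋃ (q1 : ℤ) (_ : q1 ≠ 0), S1 β A1 A2 q0 q1 q2

def T0 (β : ℝ) (A1 A2 : ℕ) (q2 : ℤ) : Set (ℝ × ℝ × ℝ) :=
  ⋃ (q0 : ℤ) (_ : q0 ≠ 0), S1 β A1 A2 q0 0 q2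

lemma measurable_T1 (β : ℝ) (A1 A2 : ℕ) (q0 q2 : ℤ) : MeasurableSet (T1 β A1 A2 q0 q2) :=
  MeasurableSet.iUnion fun q1 => MeasurableSet.iUnion fun _ => measurable_S1 β A1 A2 q0 q1 q2

lemma measurable_T0 (β : ℝ) (A1 A2 : ℕ) (q2 : ℤ) : MeasurableSet (T0 β A1 A2 q2) :=
  MeasurableSet.iUnion fun q0 => MeasurableSet.iUnion fun _ => measurable_S1 β A1 A2 q0 0 q2

lemma volT1 (β : ℝ) (hβ0 : 0 < β) (hβ1 : β ≤ 1) (A1 A2 : ℕ) (hA1 : 0 < A1) (q0 q2 : ℤ) :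
    volume (T1 β A1 A2 q0 q2) ≤ ENNReal.ofReal (216 * β / A1) := by
  have hA1R : (1:ℝ) ≤ (A1:ℝ) := by exact_mod_cast hA1
  have h9 : ENNReal.ofReal (216 * β / A1) = 9 * ENNReal.ofReal (24 * β / A1) := by
    rw [show (216:ℝ) * β / A1 = 9 * (24 * β / A1) by ring,
      ENNReal.ofReal_mul (by norm_num)]
    norm_num
  rw [h9]
  apply fub3mid _ (measurable_T1 β A1 A2 q0 q2)
  · intro x z
    refine le_trans (measure_mono ?_) (keyone (A1:ℝ) hA1R β (x * q0 + (A2:ℝ) * z * q2) hβ0 hβ1)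
    intro y hy
    simp only [T1, S1, Set.mem_iUnion, Set.mem_setOf_eq] at hy
    obtain ⟨q1, hq1, _, hy2, _, habs⟩ := hy
    refine ⟨hy2, q1, hq1, ?_⟩
    rw [show (A1:ℝ) * q1 * y + (x * q0 + (A2:ℝ) * z * q2)
      = x * q0 + (A1:ℝ) * y * q1 + (A2:ℝ) * z * q2 by ring]
    exact habs
  · intro p hp
    simp only [T1, S1, Set.mem_iUnion, Set.mem_setOf_eq] at hp
    obtain ⟨q1, hq1, h1, h2, h3, _⟩ := hp
    exact ⟨h1, h3⟩

lemma volT0 (β : ℝ) (hβ0 : 0 < β) (hβ1 : β ≤ 1) (A1 A2 : ℕ) (q2 : ℤ) :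
    volume (T0 β A1 A2 q2) ≤ ENNReal.ofReal (216 * β) := by
  have h9 : ENNReal.ofReal (216 * β) = 9 * ENNReal.ofReal (24 * β / 1) := by
    rw [show (216:ℝ) * β = 9 * (24 * β / 1) by ring,
      ENNReal.ofReal_mul (by norm_num)]
    norm_num
  rw [h9]
  apply fub3fst _ (measurable_T0 β A1 A2 q2)
  · intro y z
    refine le_trans (measure_mono ?_) (keyone 1 le_rfl β ((A2:ℝ) * z * q2) hβ0 hβ1)
    intro x hx
    simp only [T0, S1, Set.mem_iUnion, Set.mem_setOf_eq] at hx
    obtain ⟨q0, hq0, hx1, _, _, habs⟩ := hx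
    refine ⟨hx1, q0, hq0, ?_⟩
    rw [show (1:ℝ) * q0 * x + ((A2:ℝ) * z * q2)
      = x * q0 + (A1:ℝ) * y * (0:ℤ) + (A2:ℝ) * z * q2 by push_cast; ring]
    exact habs
  · intro p hp
    simp only [T0, S1, Set.mem_iUnion, Set.mem_setOf_eq] at hp
    obtain ⟨q0, hq0, _, h2, h3, _⟩ := hp
    exact ⟨h2, h3⟩

end Stmt3Aux

open Stmt3Aux

/-- measure bound from the proof of Lemma 5 of the paper
(case in which the first scaling coefficient is the smallest). -/
theorem stmt_3 (β : ℝ) (hβ : β ∈ Set.Ioc (0:ℝ) 1)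
    (A1 A2 Q0 Q1 Q2 : ℕ) (hA1 : 0 < A1) (hA2 : 0 < A2)
    (hQ0 : 0 < Q0) (hQ1 : 0 < Q1) (hQ2 : 0 < Q2)
    (hle : A2 * Q2 ≤ Q0) :
    volume (⋃ (q0 : ℤ) (q1 : ℤ) (q2 : ℤ) (_ : (q0, q1, q2) ≠ (0, 0, 0))
        (_ : |q0| ≤ (Q0 : ℤ)) (_ : |q1| ≤ (Q1 : ℤ)) (_ : |q2| ≤ (Q2 : ℤ)),
        {g : ℝ × ℝ × ℝ |
          g.1 ∈ Set.Ioc (1:ℝ) 4 ∧ g.2.1 ∈ Set.Ioc (1:ℝ) 4 ∧ g.2.2 ∈ Set.Ioc (1:ℝ) 4 ∧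
          |g.1 * (q0 : ℝ) + (A1 : ℝ) * g.2.1 * (q1 : ℝ) + (A2 : ℝ) * g.2.2 * (q2 : ℝ)| < β})
      ≤ ENNReal.ofReal (6652 * β * max (Q2 : ℝ) ((Q0 : ℝ) * (Q2 : ℝ) / (A1 : ℝ))) := by
  obtain ⟨hβ0, hβ1⟩ := hβ
  set V1 : Set (ℝ × ℝ × ℝ) :=
    ⋃ q0 ∈ Finset.Icc (-(Q0:ℤ)) (Q0:ℤ), ⋃ q2 ∈ Finset.Icc (-(Q2:ℤ)) (Q2:ℤ),
      T1 β A1 A2 q0 q2 with hV1def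
  set V0 : Set (ℝ × ℝ × ℝ) :=
    ⋃ q2 ∈ Finset.Icc (-(Q2:ℤ)) (Q2:ℤ), T0 β A1 A2 q2 with hV0def
  have hcover : (⋃ (q0 : ℤ) (q1 : ℤ) (q2 : ℤ) (_ : (q0, q1, q2) ≠ (0, 0, 0))
        (_ : |q0| ≤ (Q0 : ℤ)) (_ : |q1| ≤ (Q1 : ℤ)) (_ : |q2| ≤ (Q2 : ℤ)),
        {g : ℝ × ℝ × ℝ |
          g.1 ∈ Set.Ioc (1:ℝ) 4 ∧ g.2.1 ∈ Set.Ioc (1:ℝ) 4 ∧ g.2.2 ∈ Set.Ioc (1:ℝ) 4 ∧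
          |g.1 * (q0 : ℝ) + (A1 : ℝ) * g.2.1 * (q1 : ℝ) + (A2 : ℝ) * g.2.2 * (q2 : ℝ)| < β})
      ⊆ V1 ∪ V0 := by
    intro g hg
    simp only [Set.mem_iUnion] at hg
    obtain ⟨q0, q1, q2, hne, hb0, hb1, hb2, hmem⟩ := hg
    have hmem' : g ∈ S1 β A1 A2 q0 q1 q2 := hmem
    by_cases hq1 : q1 = 0
    · by_cases hq0 : q0 = 0
      · exfalso
        have hq2 : q2 ≠ 0 := by
          intro h; exact hne (by rw [hq0, hq1, h])
        obtain ⟨hg1, hg2, hg3, habs⟩ := hmem'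
        rw [hq0, hq1] at habs
        have hA2R : (1:ℝ) ≤ (A2:ℝ) := by exact_mod_cast hA2
        have hq2R : (1:ℝ) ≤ |(q2:ℝ)| := by
          have : (1:ℤ) ≤ |q2| := Int.one_le_abs hq2
          calc (1:ℝ) ≤ ((|q2|:ℤ):ℝ) := by exact_mod_cast this
            _ = |(q2:ℝ)| := by rw [Int.cast_abs]
        have heq : |g.1 * ((0:ℤ):ℝ) + (A1:ℝ) * g.2.1 * ((0:ℤ):ℝ) + (A2:ℝ) * g.2.2 * (q2:ℝ)|
            = (A2:ℝ) * g.2.2 * |(q2:ℝ)| := by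
          push_cast
          rw [show g.1 * 0 + (A1:ℝ) * g.2.1 * 0 + (A2:ℝ) * g.2.2 * (q2:ℝ)
            = (A2:ℝ) * g.2.2 * (q2:ℝ) by ring, abs_mul,
            abs_of_nonneg (by nlinarith [hg3.1] : (0:ℝ) ≤ (A2:ℝ) * g.2.2)]
        rw [heq] at habs
        have hg31 : (1:ℝ) < g.2.2 := hg3.1
        have hstep1 : g.2.2 ≤ (A2:ℝ) * g.2.2 := by nlinarith
        have hstep2 : (A2:ℝ) * g.2.2 ≤ (A2:ℝ) * g.2.2 * |(q2:ℝ)| :=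
          le_mul_of_one_le_right (by nlinarith) hq2R
        linarith
      · -- q1 = 0, q0 ≠ 0 : in V0
        right
        rw [hV0def]
        have h2 : q2 ∈ Finset.Icc (-(Q2:ℤ)) (Q2:ℤ) := by
          rw [Finset.mem_Icc]
          constructor <;> [linarith [neg_abs_le q2]; linarith [le_abs_self q2]]
        refine Set.mem_biUnion h2 ?_
        refine Set.mem_iUnion.mpr ⟨q0, Set.mem_iUnion.mpr ⟨hq0, ?_⟩⟩
        rw [← hq1]
        exact hmem'
    · -- q1 ≠ 0 : in V1
      left
      rw [hV1def]
      have h0 : q0 ∈ Finset.Icc (-(Q0:ℤ)) (Q0:ℤ) := by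
        rw [Finset.mem_Icc]; constructor <;> [linarith [neg_abs_le q0]; linarith [le_abs_self q0]]
      have h2 : q2 ∈ Finset.Icc (-(Q2:ℤ)) (Q2:ℤ) := by
        rw [Finset.mem_Icc]; constructor <;> [linarith [neg_abs_le q2]; linarith [le_abs_self q2]]
      refine Set.mem_biUnion h0 (Set.mem_biUnion h2 ?_)
      exact Set.mem_iUnion.mpr ⟨q1, Set.mem_iUnion.mpr ⟨hq1, hmem'⟩⟩
  refine le_trans (measure_mono hcover) (le_trans (measure_union_le _ _) ?_)
  have hcard0 : (Finset.Icc (-(Q0:ℤ)) (Q0:ℤ)).card = 2 * Q0 + 1 := by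
    rw [Int.card_Icc]; omega
  have hcard2 : (Finset.Icc (-(Q2:ℤ)) (Q2:ℤ)).card = 2 * Q2 + 1 := by
    rw [Int.card_Icc]; omega
  have hV1vol : volume V1 ≤ ((2 * Q0 + 1 : ℕ) : ℝ≥0∞) *
      (((2 * Q2 + 1 : ℕ) : ℝ≥0∞) * ENNReal.ofReal (216 * β / A1)) := by
    rw [hV1def]
    refine le_trans (measure_biUnion_finset_le _ _) ?_
    have hinner : ∀ q0 ∈ Finset.Icc (-(Q0:ℤ)) (Q0:ℤ),
        volume (⋃ q2 ∈ Finset.Icc (-(Q2:ℤ)) (Q2:ℤ), T1 β A1 A2 q0 q2)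
          ≤ ((2 * Q2 + 1 : ℕ) : ℝ≥0∞) * ENNReal.ofReal (216 * β / A1) := by
      intro q0 _
      refine le_trans (measure_biUnion_finset_le _ _) ?_
      refine le_trans (Finset.sum_le_sum fun q2 _ => volT1 β hβ0 hβ1 A1 A2 hA1 q0 q2) ?_
      rw [Finset.sum_const, nsmul_eq_mul, hcard2]
    refine le_trans (Finset.sum_le_sum hinner) ?_
    rw [Finset.sum_const, nsmul_eq_mul, hcard0]
  have hV0vol : volume V0 ≤ ((2 * Q2 + 1 : ℕ) : ℝ≥0∞) * ENNReal.ofReal (216 * β) := by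
    rw [hV0def]
    refine le_trans (measure_biUnion_finset_le _ _) ?_
    refine le_trans (Finset.sum_le_sum fun q2 _ => volT0 β hβ0 hβ1 A1 A2 q2) ?_
    rw [Finset.sum_const, nsmul_eq_mul, hcard2]
  refine le_trans (add_le_add hV1vol hV0vol) ?_
  -- now pure arithmetic in ℝ
  have hA1R : (1:ℝ) ≤ (A1:ℝ) := by exact_mod_cast hA1
  have hA1pos : (0:ℝ) < (A1:ℝ) := by linarith
  have hQ0R : (1:ℝ) ≤ (Q0:ℝ) := by exact_mod_cast hQ0
  have hQ2R : (1:ℝ) ≤ (Q2:ℝ) := by exact_mod_cast hQ2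
  set m : ℝ := max (Q2 : ℝ) ((Q0 : ℝ) * (Q2 : ℝ) / (A1 : ℝ)) with hm
  have hm1 : (Q2:ℝ) ≤ m := le_max_left _ _
  have hm2 : (Q0:ℝ) * (Q2:ℝ) / (A1:ℝ) ≤ m := le_max_right _ _
  have hm0 : (0:ℝ) ≤ m := le_trans (by linarith) hm1
  have e1 : ((2 * Q0 + 1 : ℕ) : ℝ≥0∞) * (((2 * Q2 + 1 : ℕ) : ℝ≥0∞) * ENNReal.ofReal (216 * β / A1))
      = ENNReal.ofReal (((2 * Q0 + 1 : ℕ) : ℝ) * (((2 * Q2 + 1 : ℕ) : ℝ) * (216 * β / A1))) := by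
    rw [ENNReal.ofReal_mul (by positivity), ENNReal.ofReal_mul (by positivity),
      ENNReal.ofReal_natCast, ENNReal.ofReal_natCast]
  have e0 : ((2 * Q2 + 1 : ℕ) : ℝ≥0∞) * ENNReal.ofReal (216 * β)
      = ENNReal.ofReal (((2 * Q2 + 1 : ℕ) : ℝ) * (216 * β)) := by
    rw [← ENNReal.ofReal_natCast (2 * Q2 + 1), ← ENNReal.ofReal_mul (by positivity)]
  rw [e1, e0, ← ENNReal.ofReal_add (by positivity) (by positivity)]
  apply ENNReal.ofReal_le_ofReal
  push_cast
  have key1 : (2 * (Q0:ℝ) + 1) * ((2 * (Q2:ℝ) + 1) * (216 * β / A1))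
      ≤ 1944 * β * m := by
    have step1 : (2 * (Q0:ℝ) + 1) * ((2 * (Q2:ℝ) + 1) * (216 * β / A1))
        = ((2 * (Q0:ℝ) + 1) * (2 * (Q2:ℝ) + 1)) * (216 * β / A1) := by ring
    have step2 : ((2 * (Q0:ℝ) + 1) * (2 * (Q2:ℝ) + 1)) * (216 * β / A1)
        ≤ (9 * ((Q0:ℝ) * (Q2:ℝ))) * (216 * β / A1) := by
      apply mul_le_mul_of_nonneg_right _ (by positivity)
      nlinarith
    have step3 : (9 * ((Q0:ℝ) * (Q2:ℝ))) * (216 * β / A1)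
        = 1944 * β * ((Q0:ℝ) * (Q2:ℝ) / A1) := by ring
    have step4 : 1944 * β * ((Q0:ℝ) * (Q2:ℝ) / A1) ≤ 1944 * β * m :=
      mul_le_mul_of_nonneg_left hm2 (by positivity)
    linarith
  have key2 : (2 * (Q2:ℝ) + 1) * (216 * β) ≤ 648 * β * m := by
    have step1 : (2 * (Q2:ℝ) + 1) * (216 * β) ≤ (3 * (Q2:ℝ)) * (216 * β) := by
      apply mul_le_mul_of_nonneg_right _ (by positivity)
      linarith
    have step2 : (3 * (Q2:ℝ)) * (216 * β) = 648 * β * (Q2:ℝ) := by ring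
    have step3 : 648 * β * (Q2:ℝ) ≤ 648 * β * m :=
      mul_le_mul_of_nonneg_left hm1 (by positivity)
    linarith
  nlinarith [mul_nonneg hβ0.le hm0]
end

section
/- Let δ ∈ (0,1] and let n0, n1, n2, R̄0, R̄1, R̄2, R̄3 be nonnegative integers with n1 ≥ n0 ≥ n2 satisfying R̄0 + R̄1 + R̄2 + R̄3 ≤ n1 − 6 − log₂(6652/δ), R̄0 + R̄2 + R̄3 ≤ n0 − 6 − log₂(6652/δ), and R̄2 + R̄3 ≤ n2 − 6. Let B be the set of (g0,g1,g2) ∈ (1,4]³ for which there exist integers q0, q1, q2 with (q0,q1,q2) ≠ (0,0,0), |q0| ≤ 2^{R̄0}, |q1| ≤ 2^{R̄1}, |q2| ≤ 2^{R̄2}, and |2^{n0−R̄0}·g0·q0 + 2^{n1−R̄1}·g1·q1 + 2^{n2−R̄2}·g2·q2| ≤ 2^{R̄3+6}. Then μ(B) ≤ δ. -/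
/-!
Write `a_i` for the three powers of two and `T = 2^(R̄3+6)`. If `q1 ≠ 0`, fix `(q0, q2)` and
slice along `g1`; if `q1 = 0 ≠ q0`, fix `q2` and slice along `g0`; `q0 = q1 = 0` is impossible,
since `a2 ≥ T` and `g2 > 1` make the last term alone too large. Each slice is a set
`{g ∈ (1,4] : |a g q + c| ≤ T for some integer q ≠ 0}` of measure at most `10 T / a`: only
multipliers with `(|c| - T) / (4a) ≤ |q| ≤ (|c| + T) / a` occur, each contributing an interval of
length `2T / (a |q|)`. Summing over the `O(2^(R̄0+R̄2))` pairs `(q0, q2)` and the `O(2^R̄2)` values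
of `q2`, the rate conditions bound the total by `(810 + 270) δ / 6652 ≤ δ`.
-/

open MeasureTheory Set
open scoped ENNReal

namespace MeasureTheory.Measure

variable {α β : Type*} [MeasurableSpace α] [MeasurableSpace β] {μ : Measure α} {ν : Measure β}
  {A : Set (α × β)} {K : ℝ≥0∞}

theorem prod_apply_le_mul_of_fiber_le (hA : MeasurableSet A) {S : Set α}
    (hS : ∀ p ∈ A, p.1 ∈ S) (hK : ∀ x ∈ S, ν (Prod.mk x ⁻¹' A) ≤ K) :
    μ.prod ν A ≤ K * μ S := by
  refine (prod_apply_le hA).trans <| (lintegral_mono fun x => ?_).trans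
    (lintegral_indicator_const_le S K)
  by_cases hx : x ∈ S
  · simpa [indicator_of_mem hx] using hK x hx
  · have : Prod.mk x ⁻¹' A = ∅ := eq_empty_of_forall_notMem fun y hy => hx (hS _ hy)
    simp [this, indicator_of_notMem hx]

theorem prod_apply_le_mul_of_fiber_le_symm [SFinite μ] [SFinite ν] (hA : MeasurableSet A)
    {S : Set β} (hS : ∀ p ∈ A, p.2 ∈ S) (hK : ∀ y ∈ S, μ ((fun x => (x, y)) ⁻¹' A) ≤ K) :
    μ.prod ν A ≤ K * ν S := by
  rw [← prod_swap, map_apply measurable_swap hA]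
  exact prod_apply_le_mul_of_fiber_le (measurable_swap hA) (fun p hp => hS _ hp) hK

end MeasureTheory.Measure

theorem Real.volume_setOf_abs_mul_sub_le {b : ℝ} (hb : 0 < b) (c T : ℝ) :
    volume {g : ℝ | |b * g - c| ≤ T} = ENNReal.ofReal (2 * (T / b)) := by
  have : {g : ℝ | |b * g - c| ≤ T} = (b * ·) ⁻¹' Metric.closedBall c T := by
    ext; simp [Real.dist_eq]
  rw [this, Real.volume_preimage_mul_left hb.ne', Real.volume_closedBall,
    abs_of_pos (inv_pos.2 hb), ← ENNReal.ofReal_mul (by positivity), div_eq_inv_mul,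
    mul_left_comm]

theorem volume_exists_int_mul_near_le {a T : ℝ} (c : ℝ) (ha : 0 < a) (hT : 0 ≤ T)
    (h2T : 2 * T ≤ a) :
    volume {g ∈ Ioc (1:ℝ) 4 | ∃ q : ℤ, q ≠ 0 ∧ |a * g * q + c| ≤ T}
      ≤ ENNReal.ofReal (10 * (T / a)) := by
  set d := |c|
  set L := max 1 ((d - T) / (4 * a))
  have hL1 : 1 ≤ L := le_max_left _ _
  set F := Finset.Icc ⌈L⌉₊ ⌊(d + T) / a⌋₊
  have hcover : {g ∈ Ioc (1:ℝ) 4 | ∃ q : ℤ, q ≠ 0 ∧ |a * g * q + c| ≤ T} ⊆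
      ⋃ m ∈ F, {g : ℝ | |a * m * g - d| ≤ T} := by
    rintro g ⟨⟨hg1, hg4⟩, q, hq, hgq⟩
    have hm : |a * q.natAbs * g - d| ≤ T := by
      have hagq : |a * g * q| = a * q.natAbs * g := by
        rw [abs_mul, abs_mul, abs_of_pos ha, abs_of_pos (by linarith : 0 < g), Nat.cast_natAbs,
          Int.cast_abs]
        ring
      have h := abs_abs_sub_abs_le_abs_sub (a * g * q) (-c)
      rw [abs_neg, sub_neg_eq_add, hagq] at h
      exact h.trans hgq
    have hm1 : (1:ℝ) ≤ q.natAbs := by exact_mod_cast Int.natAbs_pos.2 hq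
    have ham : 0 ≤ a * q.natAbs := by positivity
    have hm' := abs_le.1 hm
    refine mem_iUnion₂.2 ⟨q.natAbs, Finset.mem_Icc.2 ⟨Nat.ceil_le.2 (max_le hm1 ?_),
      Nat.le_floor ?_⟩, hm⟩
    · rw [div_le_iff₀ (by positivity)]
      linarith [mul_le_mul_of_nonneg_left hg4 ham]
    · rw [le_div_iff₀ ha]
      linarith [mul_le_mul_of_nonneg_left hg1.le ham]
  have hterm : ∀ m ∈ F, volume {g : ℝ | |a * m * g - d| ≤ T}
      ≤ ENNReal.ofReal (2 * (T / (a * L))) := by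
    intro m hm
    have hLm : L ≤ m := Nat.ceil_le.1 (Finset.mem_Icc.1 hm).1
    rw [Real.volume_setOf_abs_mul_sub_le (mul_pos ha (by linarith))]
    gcongr
  have hcard : (F.card : ℝ) ≤ (d + T) / a := by
    have : F.card ≤ ⌊(d + T) / a⌋₊ := by
      have : 1 ≤ ⌈L⌉₊ := Nat.one_le_iff_ne_zero.2 (Nat.ceil_pos.2 (by linarith)).ne'
      rw [Nat.card_Icc]; omega
    exact (Nat.cast_le.2 this).trans (Nat.floor_le (by positivity))
  have hL : (d + T) / a ≤ 5 * L := by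
    have h1 : (d - T) / (4 * a) ≤ L := le_max_right _ _
    rw [div_le_iff₀ (by positivity)] at h1
    rw [div_le_iff₀ ha]
    nlinarith
  calc volume {g ∈ Ioc (1:ℝ) 4 | ∃ q : ℤ, q ≠ 0 ∧ |a * g * q + c| ≤ T}
      ≤ ∑ m ∈ F, volume {g : ℝ | |a * m * g - d| ≤ T} :=
        (measure_mono hcover).trans (measure_biUnion_finset_le _ _)
    _ ≤ ∑ _m ∈ F, ENNReal.ofReal (2 * (T / (a * L))) := Finset.sum_le_sum hterm
    _ = ENNReal.ofReal (F.card * (2 * (T / (a * L)))) := by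
        rw [Finset.sum_const, nsmul_eq_mul, ← ENNReal.ofReal_natCast,
          ← ENNReal.ofReal_mul (by positivity)]
    _ ≤ ENNReal.ofReal (5 * L * (2 * (T / (a * L)))) := by gcongr; linarith
    _ = ENNReal.ofReal (10 * (T / a)) := by
        congr 1; field_simp; ring

local notation "𝕀" => Ioc (1:ℝ) 4

theorem volume_Ioc_one_four : volume 𝕀 = ENNReal.ofReal 3 := by
  rw [Real.volume_Ioc]; norm_num

theorem volume_exists_int_snd_near_le {a0 a1 a2 T : ℝ} (q0 q2 : ℤ) (ha1 : 0 < a1) (hT : 0 ≤ T)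
    (h2T : 2 * T ≤ a1) :
    volume {g : ℝ × ℝ × ℝ | g ∈ 𝕀 ×ˢ 𝕀 ×ˢ 𝕀 ∧
      ∃ q1 : ℤ, q1 ≠ 0 ∧ |a0 * g.1 * q0 + a1 * g.2.1 * q1 + a2 * g.2.2 * q2| ≤ T}
      ≤ ENNReal.ofReal (90 * (T / a1)) := by
  set A := {g : ℝ × ℝ × ℝ | g ∈ 𝕀 ×ˢ 𝕀 ×ˢ 𝕀 ∧
      ∃ q1 : ℤ, q1 ≠ 0 ∧ |a0 * g.1 * q0 + a1 * g.2.1 * q1 + a2 * g.2.2 * q2| ≤ T}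
  have hA : MeasurableSet A := by measurability
  have hfiber : ∀ x z, volume {y | (x, y, z) ∈ A} ≤ ENNReal.ofReal (10 * (T / a1)) := by
    intro x z
    refine (measure_mono ?_).trans
      (volume_exists_int_mul_near_le (a0 * x * q0 + a2 * z * q2) ha1 hT h2T)
    rintro y ⟨hbox, q1, hq1, h⟩
    exact ⟨hbox.2.1, q1, hq1, by convert h using 2; ring⟩
  calc volume A
      ≤ ENNReal.ofReal (10 * (T / a1)) * volume 𝕀 * volume 𝕀 := by
        rw [Measure.volume_eq_prod]
        refine Measure.prod_apply_le_mul_of_fiber_le hA (fun g hg => hg.1.1) fun x _ => ?_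
        rw [Measure.volume_eq_prod]
        exact Measure.prod_apply_le_mul_of_fiber_le_symm (hA.preimage measurable_prodMk_left)
          (fun p hp => hp.1.2.2) fun z _ => hfiber x z
    _ = ENNReal.ofReal (90 * (T / a1)) := by
        rw [volume_Ioc_one_four, ← ENNReal.ofReal_mul (by positivity),
          ← ENNReal.ofReal_mul (by positivity)]
        ring_nf

theorem volume_exists_int_fst_near_le {a0 a2 T : ℝ} (q2 : ℤ) (ha0 : 0 < a0) (hT : 0 ≤ T)
    (h2T : 2 * T ≤ a0) :
    volume {g : ℝ × ℝ × ℝ | g ∈ 𝕀 ×ˢ 𝕀 ×ˢ 𝕀 ∧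
      ∃ q0 : ℤ, q0 ≠ 0 ∧ |a0 * g.1 * q0 + a2 * g.2.2 * q2| ≤ T}
      ≤ ENNReal.ofReal (90 * (T / a0)) := by
  set A := {g : ℝ × ℝ × ℝ | g ∈ 𝕀 ×ˢ 𝕀 ×ˢ 𝕀 ∧
      ∃ q0 : ℤ, q0 ≠ 0 ∧ |a0 * g.1 * q0 + a2 * g.2.2 * q2| ≤ T}
  have hA : MeasurableSet A := by measurability
  calc volume A
      ≤ ENNReal.ofReal (10 * (T / a0)) * (volume 𝕀 * volume 𝕀) := by
        rw [Measure.volume_eq_prod, ← Measure.prod_prod]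
        refine Measure.prod_apply_le_mul_of_fiber_le_symm hA (fun g hg => hg.1.2) fun w _ => ?_
        refine (measure_mono ?_).trans
          (volume_exists_int_mul_near_le (a2 * w.2 * q2) ha0 hT h2T)
        rintro x ⟨hbox, q0, hq0, h⟩
        exact ⟨hbox.1, q0, hq0, h⟩
    _ = ENNReal.ofReal (90 * (T / a0)) := by
        rw [volume_Ioc_one_four, ← ENNReal.ofReal_mul (by positivity),
          ← ENNReal.ofReal_mul (by positivity)]
        ring_nf

theorem Int.card_Icc_neg_self (N : ℕ) : (Finset.Icc (-(N:ℤ)) N).card = 2 * N + 1 := by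
  rw [Int.card_Icc]; omega

theorem volume_groshev_le {a0 a1 a2 T : ℝ} (N0 N2 : ℕ) (ha0 : 0 < a0) (ha1 : 0 < a1)
    (ha2 : 0 < a2) (hT : 0 ≤ T) (h2T0 : 2 * T ≤ a0) (h2T1 : 2 * T ≤ a1) (hTa2 : T ≤ a2) :
    volume {g : ℝ × ℝ × ℝ | g ∈ 𝕀 ×ˢ 𝕀 ×ˢ 𝕀 ∧ ∃ q0 q1 q2 : ℤ, (q0, q1, q2) ≠ (0, 0, 0) ∧
        |q0| ≤ N0 ∧ |q2| ≤ N2 ∧ |a0 * g.1 * q0 + a1 * g.2.1 * q1 + a2 * g.2.2 * q2| ≤ T}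
      ≤ ENNReal.ofReal ((2 * N0 + 1) * (2 * N2 + 1) * (90 * (T / a1))
          + (2 * N2 + 1) * (90 * (T / a0))) := by
  set F0 := Finset.Icc (-(N0:ℤ)) N0
  set F2 := Finset.Icc (-(N2:ℤ)) N2
  set S1 := fun q0 q2 : ℤ => {g : ℝ × ℝ × ℝ | g ∈ 𝕀 ×ˢ 𝕀 ×ˢ 𝕀 ∧
      ∃ q1 : ℤ, q1 ≠ 0 ∧ |a0 * g.1 * q0 + a1 * g.2.1 * q1 + a2 * g.2.2 * q2| ≤ T}
  set S2 := fun q2 : ℤ => {g : ℝ × ℝ × ℝ | g ∈ 𝕀 ×ˢ 𝕀 ×ˢ 𝕀 ∧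
      ∃ q0 : ℤ, q0 ≠ 0 ∧ |a0 * g.1 * q0 + a2 * g.2.2 * q2| ≤ T}
  have hcover : {g : ℝ × ℝ × ℝ | g ∈ 𝕀 ×ˢ 𝕀 ×ˢ 𝕀 ∧ ∃ q0 q1 q2 : ℤ, (q0, q1, q2) ≠ (0, 0, 0) ∧
      |q0| ≤ N0 ∧ |q2| ≤ N2 ∧ |a0 * g.1 * q0 + a1 * g.2.1 * q1 + a2 * g.2.2 * q2| ≤ T}
      ⊆ (⋃ q0 ∈ F0, ⋃ q2 ∈ F2, S1 q0 q2) ∪ ⋃ q2 ∈ F2, S2 q2 := by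
    rintro g ⟨hg, q0, q1, q2, hne, hq0, hq2, h⟩
    have hq2F : q2 ∈ F2 := Finset.mem_Icc.2 (abs_le.1 hq2)
    rcases ne_or_eq q1 0 with hq1 | rfl
    · exact Or.inl (mem_biUnion (Finset.mem_Icc.2 (abs_le.1 hq0))
        (mem_biUnion hq2F ⟨hg, q1, hq1, h⟩))
    rcases ne_or_eq q0 0 with hq0' | rfl
    · exact Or.inr (mem_biUnion hq2F ⟨hg, q0, hq0', by simpa using h⟩)
    exfalso
    have hq2' : (1:ℝ) ≤ |(q2:ℝ)| := by
      rw [← Int.cast_abs]; exact_mod_cast Int.one_le_abs (by rintro rfl; exact hne rfl)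
    simp only [Int.cast_zero, mul_zero, zero_add, abs_mul, abs_of_pos ha2,
      abs_of_pos (by linarith [hg.2.2.1] : 0 < g.2.2)] at h
    nlinarith [hg.2.2.1, mul_le_mul_of_nonneg_left hq2' (mul_pos ha2 (by linarith [hg.2.2.1])).le]
  calc _ ≤ volume ((⋃ q0 ∈ F0, ⋃ q2 ∈ F2, S1 q0 q2) ∪ ⋃ q2 ∈ F2, S2 q2) := measure_mono hcover
    _ ≤ ∑ q0 ∈ F0, ∑ q2 ∈ F2, volume (S1 q0 q2) + ∑ q2 ∈ F2, volume (S2 q2) := by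
        refine (measure_union_le _ _).trans (add_le_add ?_ (measure_biUnion_finset_le _ _))
        exact (measure_biUnion_finset_le _ _).trans
          (Finset.sum_le_sum fun _ _ => measure_biUnion_finset_le _ _)
    _ ≤ ∑ _q0 ∈ F0, ∑ _q2 ∈ F2, ENNReal.ofReal (90 * (T / a1))
          + ∑ _q2 ∈ F2, ENNReal.ofReal (90 * (T / a0)) := by
        gcongr with q0 _ q2 _ q2 _
        · exact volume_exists_int_snd_near_le q0 q2 ha1 hT h2T1
        · exact volume_exists_int_fst_near_le q2 ha0 hT h2T0
    _ = ENNReal.ofReal (F0.card * (F2.card * (90 * (T / a1))) + F2.card * (90 * (T / a0))) := by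
        rw [ENNReal.ofReal_add (by positivity) (by positivity),
          ENNReal.ofReal_mul (Nat.cast_nonneg _), ENNReal.ofReal_mul (Nat.cast_nonneg _),
          ENNReal.ofReal_mul (Nat.cast_nonneg _)]
        simp only [Finset.sum_const, nsmul_eq_mul, ENNReal.ofReal_natCast]
    _ = _ := by simp only [F0, F2, Int.card_Icc_neg_self]; push_cast; ring_nf

theorem two_pow_div_zpow_le_inv_of_le_sub_logb {k n R : ℕ} {C : ℝ} (hC : 0 < C)
    (h : (k : ℝ) + R ≤ n - Real.logb 2 C) : (2:ℝ) ^ k / 2 ^ ((n:ℤ) - R) ≤ C⁻¹ := by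
  have hC' : C ≤ 2 ^ ((n:ℤ) - R) / 2 ^ k := by
    rw [zpow_sub₀ two_ne_zero, zpow_natCast, zpow_natCast]
    have := (Real.logb_le_iff_le_rpow one_lt_two hC).1 (by linarith : Real.logb 2 C ≤ n - R - k)
    rwa [Real.rpow_sub two_pos, Real.rpow_sub two_pos, Real.rpow_natCast, Real.rpow_natCast,
      Real.rpow_natCast] at this
  rwa [le_inv_comm₀ (by positivity) hC, inv_div]

theorem groshev_sum_le {P0 P2 u0 u1 δ : ℝ} (hP0 : 1 ≤ P0) (hP2 : 1 ≤ P2) (hu0 : 0 ≤ u0)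
    (hu1 : 0 ≤ u1) (h1 : P0 * P2 * u1 ≤ δ / 6652) (h0 : P2 * u0 ≤ δ / 6652) :
    (2 * P0 + 1) * (2 * P2 + 1) * (90 * u1) + (2 * P2 + 1) * (90 * u0) ≤ δ := by
  have hP : (2 * P0 + 1) * (2 * P2 + 1) ≤ 9 * (P0 * P2) := by nlinarith
  nlinarith [mul_le_mul_of_nonneg_right hP hu1,
    mul_le_mul_of_nonneg_right (show 2 * P2 + 1 ≤ 3 * P2 by linarith) hu0]

theorem stmt_5_general (δ : ℝ) (hδ : δ ∈ Set.Ioc (0:ℝ) 1)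
    (n0 n1 n2 R0 R1 R2 R3 : ℕ)
    (hc1 : (R0 : ℝ) + R1 + R2 + R3 ≤ (n1 : ℝ) - 6 - Real.logb 2 (6652 / δ))
    (hc2 : (R0 : ℝ) + R2 + R3 ≤ (n0 : ℝ) - 6 - Real.logb 2 (6652 / δ))
    (hc3 : (R2 : ℝ) + R3 ≤ (n2 : ℝ) - 6) :
    volume {g : ℝ × ℝ × ℝ |
        g.1 ∈ Set.Ioc (1:ℝ) 4 ∧ g.2.1 ∈ Set.Ioc (1:ℝ) 4 ∧ g.2.2 ∈ Set.Ioc (1:ℝ) 4 ∧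
        ∃ q0 q1 q2 : ℤ, (q0, q1, q2) ≠ (0, 0, 0) ∧
          |q0| ≤ 2 ^ R0 ∧ |q1| ≤ 2 ^ R1 ∧ |q2| ≤ 2 ^ R2 ∧
          |(2:ℝ) ^ ((n0 : ℤ) - (R0 : ℤ)) * g.1 * (q0 : ℝ)
            + (2:ℝ) ^ ((n1 : ℤ) - (R1 : ℤ)) * g.2.1 * (q1 : ℝ)
            + (2:ℝ) ^ ((n2 : ℤ) - (R2 : ℤ)) * g.2.2 * (q2 : ℝ)| ≤ 2 ^ (R3 + 6)}
      ≤ ENNReal.ofReal δ := by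
  obtain ⟨hδ0, hδ1⟩ := hδ
  have hP0 : (1:ℝ) ≤ 2 ^ R0 := one_le_pow₀ one_le_two
  have hP2 : (1:ℝ) ≤ 2 ^ R2 := one_le_pow₀ one_le_two
  have ha (n R : ℕ) : (0:ℝ) < 2 ^ ((n:ℤ) - (R:ℤ)) := zpow_pos two_pos _
  set T : ℝ := 2 ^ (R3 + 6)
  have hC : (0:ℝ) < 6652 / δ := by positivity
  have hrate1 : 2 ^ R0 * 2 ^ R2 * (T / 2 ^ ((n1:ℤ) - R1)) ≤ δ / 6652 := by
    have := two_pow_div_zpow_le_inv_of_le_sub_logb (k := R0 + R2 + (R3 + 6)) (n := n1)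
      (R := R1) hC (by push_cast; linarith)
    rwa [inv_div, pow_add, pow_add, mul_div_assoc] at this
  have hrate0 : 2 ^ R2 * (T / 2 ^ ((n0:ℤ) - R0)) ≤ δ / 6652 := by
    have := two_pow_div_zpow_le_inv_of_le_sub_logb (k := R2 + (R3 + 6)) (n := n0)
      (R := R0) hC (by push_cast; linarith)
    rwa [inv_div, pow_add, mul_div_assoc] at this
  have hTa2 : T ≤ 2 ^ ((n2:ℤ) - R2) := by
    rw [zpow_sub₀ two_ne_zero, zpow_natCast, zpow_natCast, le_div_iff₀ (by positivity), ← pow_add]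
    exact pow_le_pow_right₀ one_le_two (by exact_mod_cast (by linarith : (R3 + 6 + R2 : ℝ) ≤ n2))
  have h2T {a P : ℝ} (hpos : 0 < a) (hP : 1 ≤ P) (h : P * (T / a) ≤ δ / 6652) : 2 * T ≤ a := by
    have : T / a ≤ 1 / 2 := by nlinarith [div_nonneg (by positivity : 0 ≤ T) hpos.le]
    rw [div_le_iff₀ hpos] at this
    linarith
  refine (measure_mono ?_).trans ((volume_groshev_le (2 ^ R0) (2 ^ R2) (ha n0 R0) (ha n1 R1)
    (ha n2 R2) (by positivity) ?_ ?_ hTa2).trans (ENNReal.ofReal_le_ofReal ?_))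
  · rintro g ⟨h0, h1, h2, q0, q1, q2, hne, hq0, -, hq2, h⟩
    exact ⟨⟨h0, h1, h2⟩, q0, q1, q2, hne, by exact_mod_cast hq0, by exact_mod_cast hq2, h⟩
  · exact h2T (ha n0 R0) hP2 hrate0
  · exact h2T (ha n1 R1) (one_le_mul_of_one_le_of_one_le hP0 hP2) hrate1
  · push_cast
    exact groshev_sum_le hP0 hP2 (by positivity) (by positivity) hrate1 hrate0

/-- the nondegenerate core of Lemma 5 of the paper (Groshev-type
outage bound for the modulation constellation of the Gaussian X-channel). -/
theorem stmt_5 (δ : ℝ) (hδ : δ ∈ Set.Ioc (0:ℝ) 1)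
    (n0 n1 n2 R0 R1 R2 R3 : ℕ)
    (hn10 : n0 ≤ n1) (hn02 : n2 ≤ n0)
    (hc1 : (R0 : ℝ) + R1 + R2 + R3 ≤ (n1 : ℝ) - 6 - Real.logb 2 (6652 / δ))
    (hc2 : (R0 : ℝ) + R2 + R3 ≤ (n0 : ℝ) - 6 - Real.logb 2 (6652 / δ))
    (hc3 : (R2 : ℝ) + R3 ≤ (n2 : ℝ) - 6) :
    volume {g : ℝ × ℝ × ℝ |
        g.1 ∈ Set.Ioc (1:ℝ) 4 ∧ g.2.1 ∈ Set.Ioc (1:ℝ) 4 ∧ g.2.2 ∈ Set.Ioc (1:ℝ) 4 ∧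
        ∃ q0 q1 q2 : ℤ, (q0, q1, q2) ≠ (0, 0, 0) ∧
          |q0| ≤ 2 ^ R0 ∧ |q1| ≤ 2 ^ R1 ∧ |q2| ≤ 2 ^ R2 ∧
          |(2:ℝ) ^ ((n0 : ℤ) - (R0 : ℤ)) * g.1 * (q0 : ℝ)
            + (2:ℝ) ^ ((n1 : ℤ) - (R1 : ℤ)) * g.2.1 * (q1 : ℝ)
            + (2:ℝ) ^ ((n2 : ℤ) - (R2 : ℤ)) * g.2.2 * (q2 : ℝ)| ≤ 2 ^ (R3 + 6)}
      ≤ ENNReal.ofReal δ :=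
  stmt_5_general δ hδ n0 n1 n2 R0 R1 R2 R3 hc1 hc2 hc3
end

section
/- Let δ > 0 and let B̃ ⊆ (1,4]³ be a Lebesgue-measurable set of triples (g0,g1,g2) with three-dimensional Lebesgue measure μ₃(B̃) ≤ δ. Define B = {(h11,h12,h21,h22) ∈ (1,2]⁴ : (h11·h12, h11·h22, h12·h21) ∈ B̃}. Then the four-dimensional Lebesgue measure of B satisfies μ₄(B) ≤ δ. -/
/-!
Extend the product map by the free coordinate `h₂₂` to
`F (h₁₁, h₁₂, h₂₁, h₂₂) = (h₂₂, h₁₁ h₁₂, h₁₁ h₂₂, h₁₂ h₂₁)`. It is injective when `h₁₁, h₁₂, h₂₂ ≠ 0`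
and its Jacobian determinant is `h₁₁ h₁₂ h₂₂ ≥ 1` on `(1,2]⁴`, so `F` does not shrink `B`, while
`F '' B ⊆ (1,2] × B̃`, a set of measure `μ₃(B̃) ≤ δ`.
-/

open MeasureTheory Set

theorem addHaar_le_addHaar_image_of_one_le_abs_det {E : Type*} [NormedAddCommGroup E]
    [NormedSpace ℝ E] [FiniteDimensional ℝ E] [MeasurableSpace E] [BorelSpace E]
    (μ : Measure E) [μ.IsAddHaarMeasure] {s : Set E} {f : E → E} {f' : E → E →L[ℝ] E}
    (hs : MeasurableSet s) (hf' : ∀ x ∈ s, HasFDerivWithinAt f (f' x) s x) (hf : InjOn f s)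
    (hdet : ∀ x ∈ s, 1 ≤ |(f' x).det|) :
    μ s ≤ μ (f '' s) :=
  calc μ s = ∫⁻ _ in s, 1 ∂μ := (setLIntegral_one s).symm
    _ ≤ ∫⁻ x in s, ENNReal.ofReal |(f' x).det| ∂μ :=
      setLIntegral_mono' hs fun x hx => ENNReal.one_le_ofReal.2 (hdet x hx)
    _ ≤ μ (f '' s) := lintegral_abs_det_fderiv_le_addHaar_image μ hs hf' hf

-- Instance search does not see through the defeq `volume = volume.prod volume`.
instance : (volume : Measure (ℝ × ℝ × ℝ)).IsAddHaarMeasure :=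
  Measure.prod.instIsAddHaarMeasure _ _

instance : (volume : Measure (ℝ × ℝ × ℝ × ℝ)).IsAddHaarMeasure :=
  Measure.prod.instIsAddHaarMeasure _ _

def prodFinFourEquiv : (ℝ × ℝ × ℝ × ℝ) ≃ₗ[ℝ] (Fin 4 → ℝ) where
  toFun v := ![v.1, v.2.1, v.2.2.1, v.2.2.2]
  invFun v := (v 0, v 1, v 2, v 3)
  map_add' _ _ := by ext i; fin_cases i <;> rfl
  map_smul' _ _ := by ext i; fin_cases i <;> rfl
  left_inv _ := rfl
  right_inv v := by ext i; fin_cases i <;> rfl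

@[simp] theorem prodFinFourEquiv_apply (v : ℝ × ℝ × ℝ × ℝ) :
    prodFinFourEquiv v = ![v.1, v.2.1, v.2.2.1, v.2.2.2] := rfl

@[simp] theorem prodFinFourEquiv_symm_apply (v : Fin 4 → ℝ) :
    prodFinFourEquiv.symm v = (v 0, v 1, v 2, v 3) := rfl

def gainsToProducts (h : ℝ × ℝ × ℝ × ℝ) : ℝ × ℝ × ℝ × ℝ :=
  (h.2.2.2, h.1 * h.2.1, h.1 * h.2.2.2, h.2.1 * h.2.2.1)

noncomputable def gainsToProductsDeriv (h : ℝ × ℝ × ℝ × ℝ) :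
    (ℝ × ℝ × ℝ × ℝ) →L[ℝ] ℝ × ℝ × ℝ × ℝ :=
  LinearMap.toContinuousLinearMap
    { toFun := fun v => (v.2.2.2, h.2.1 * v.1 + h.1 * v.2.1, h.2.2.2 * v.1 + h.1 * v.2.2.2,
        h.2.2.1 * v.2.1 + h.2.1 * v.2.2.1)
      map_add' := fun v w => by ext <;> simp <;> ring
      map_smul' := fun c v => by ext <;> simp <;> ring }

@[simp] theorem gainsToProductsDeriv_apply (h v : ℝ × ℝ × ℝ × ℝ) :
    gainsToProductsDeriv h v = (v.2.2.2, h.2.1 * v.1 + h.1 * v.2.1,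
      h.2.2.2 * v.1 + h.1 * v.2.2.2, h.2.2.1 * v.2.1 + h.2.1 * v.2.2.1) := rfl

theorem hasFDerivAt_gainsToProducts (h : ℝ × ℝ × ℝ × ℝ) :
    HasFDerivAt gainsToProducts (gainsToProductsDeriv h) h := by
  have h₁ := hasFDerivAt_fst (𝕜 := ℝ) (p := h)
  have h₂ := (hasFDerivAt_snd (𝕜 := ℝ) (p := h)).fst
  have h₃ := (hasFDerivAt_snd (𝕜 := ℝ) (p := h)).snd.fst
  have h₄ := (hasFDerivAt_snd (𝕜 := ℝ) (p := h)).snd.snd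
  refine (h₄.prodMk ((h₁.mul h₂).prodMk ((h₁.mul h₄).prodMk (h₂.mul h₃)))).congr_fderiv ?_
  ext <;> simp

theorem det_gainsToProductsDeriv (h : ℝ × ℝ × ℝ × ℝ) :
    (gainsToProductsDeriv h).det = h.1 * h.2.1 * h.2.2.2 := by
  set b := Module.Basis.ofEquivFun prodFinFourEquiv
  rw [ContinuousLinearMap.det, ← LinearMap.det_toMatrix b]
  have hM : LinearMap.toMatrix b b (gainsToProductsDeriv h : (ℝ × ℝ × ℝ × ℝ) →ₗ[ℝ] _) =
      !![0, 0, 0, 1; h.2.1, h.1, 0, 0; h.2.2.2, 0, 0, h.1; 0, h.2.2.1, h.2.1, 0] := by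
    ext i j
    fin_cases i <;> fin_cases j <;> simp [b, LinearMap.toMatrix_apply]
  rw [hM, Matrix.det_succ_row_zero]
  simp [Fin.sum_univ_succ, Matrix.det_fin_three, Fin.succAbove]
  ring

theorem injOn_gainsToProducts :
    InjOn gainsToProducts {h | h.1 ≠ 0 ∧ h.2.1 ≠ 0 ∧ h.2.2.2 ≠ 0} := by
  rintro ⟨a, b, c, d⟩ ⟨ha, hb, hd⟩ ⟨a', b', c', d'⟩ - heq
  simp only [gainsToProducts, Prod.mk.injEq] at heq ha hb hd ⊢
  obtain ⟨rfl, hab, had, hbc⟩ := heq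
  obtain rfl : a = a' := mul_right_cancel₀ hd had
  obtain rfl : b = b' := mul_left_cancel₀ ha hab
  obtain rfl : c = c' := mul_left_cancel₀ hb hbc
  simp

theorem stmt_6_general (δ : ℝ)
    (Btilde : Set (ℝ × ℝ × ℝ))
    (hBmeas : MeasurableSet Btilde)
    (hBvol : volume Btilde ≤ ENNReal.ofReal δ) :
    volume {h : ℝ × ℝ × ℝ × ℝ |
        h.1 ∈ Set.Ioc (1:ℝ) 2 ∧ h.2.1 ∈ Set.Ioc (1:ℝ) 2 ∧
        h.2.2.1 ∈ Set.Ioc (1:ℝ) 2 ∧ h.2.2.2 ∈ Set.Ioc (1:ℝ) 2 ∧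
        (h.1 * h.2.1, h.1 * h.2.2.2, h.2.1 * h.2.2.1) ∈ Btilde}
      ≤ ENNReal.ofReal δ := by
  calc _ ≤ volume (gainsToProducts '' _) := by
        refine addHaar_le_addHaar_image_of_one_le_abs_det volume (by measurability)
          (fun h _ => (hasFDerivAt_gainsToProducts h).hasFDerivWithinAt)
          (injOn_gainsToProducts.mono ?_) ?_
        · rintro h ⟨h₁, h₂, -, h₄, -⟩
          exact ⟨(zero_lt_one.trans h₁.1).ne', (zero_lt_one.trans h₂.1).ne',
            (zero_lt_one.trans h₄.1).ne'⟩
        · rintro h ⟨h₁, h₂, -, h₄, -⟩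
          rw [det_gainsToProductsDeriv]
          exact (one_le_mul_of_one_le_of_one_le (one_le_mul_of_one_le_of_one_le h₁.1.le h₂.1.le)
            h₄.1.le).trans (le_abs_self _)
    _ ≤ volume (Ioc (1 : ℝ) 2 ×ˢ Btilde) := measure_mono <| by
        rintro _ ⟨h, ⟨-, -, -, h₄, hB⟩, rfl⟩
        exact ⟨h₄, hB⟩
    _ = volume Btilde := by
        rw [Measure.volume_eq_prod, Measure.prod_prod, Real.volume_Ioc]
        norm_num
    _ ≤ ENNReal.ofReal δ := hBvol

/-- Lemma 7 of the paper, transferring a measure bound on products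
of channel gains to a measure bound on the channel gains themselves. -/
theorem stmt_6 (δ : ℝ) (hδ : 0 < δ)
    (Btilde : Set (ℝ × ℝ × ℝ))
    (hBsub : Btilde ⊆ Set.Ioc (1:ℝ) 4 ×ˢ (Set.Ioc (1:ℝ) 4 ×ˢ Set.Ioc (1:ℝ) 4))
    (hBmeas : MeasurableSet Btilde)
    (hBvol : volume Btilde ≤ ENNReal.ofReal δ) :
    volume {h : ℝ × ℝ × ℝ × ℝ |
        h.1 ∈ Set.Ioc (1:ℝ) 2 ∧ h.2.1 ∈ Set.Ioc (1:ℝ) 2 ∧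
        h.2.2.1 ∈ Set.Ioc (1:ℝ) 2 ∧ h.2.2.2 ∈ Set.Ioc (1:ℝ) 2 ∧
        (h.1 * h.2.1, h.1 * h.2.2.2, h.2.1 * h.2.2.1) ∈ Btilde}
      ≤ ENNReal.ofReal δ :=
  stmt_6_general δ Btilde hBmeas hBvol
end

section
/- Let n1 and R̄3 be nonnegative integers with R̄3 ≤ n1. Let ū0, ū1, ū2 ∈ 𝔽₂^{n1}, not all zero, be such that n(ūk) ≤ n1 − R̄3 for every k ∈ {0,1,2} with ūk ≠ 0. Let B″ = {(g0,g1,g2) ∈ (1,2]³ : the components with index i ≤ n1 − R̄3 of Ḡ(g0)·ū0 + Ḡ(g1)·ū1 + Ḡ(g2)·ū2 are all zero}. Then μ(B″) ≤ 2^{R̄3 − n1 + m}, where m = min{n(ū0), n(ū1), n(ū2)}; moreover, if exactly one index k ∈ {0,1,2} attains this minimum, then μ(B″) = 0. -/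
open MeasureTheory Matrix

/-- The `j`-th binary digit of a real number `g`, viewed in `𝔽₂`:
`[g]_j = ⌊2^j g⌋ − 2⌊2^{j−1} g⌋`. -/
noncomputable def binDigit (g : ℝ) (j : ℕ) : ZMod 2 :=
  ((⌊(2:ℝ) ^ (j : ℤ) * g⌋ - 2 * ⌊(2:ℝ) ^ ((j : ℤ) - 1) * g⌋ : ℤ) : ZMod 2)

/-- The `n × n` lower-triangular Toeplitz matrix over `𝔽₂` whose `(i,j)` entry
equals `[g]_{i−j}` for `j ≤ i` and `0` for `i < j`. -/
noncomputable def Gmat (n : ℕ) (g : ℝ) : Matrix (Fin n) (Fin n) (ZMod 2) :=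
  fun i j => if (j : ℕ) ≤ (i : ℕ) then binDigit g ((i : ℕ) - (j : ℕ)) else 0

/-- `n(ū)`: the least (1-based) index `i` with `ū_i ≠ 0`, with `n(0) = +∞`. -/
noncomputable def firstIdx {n : ℕ} (u : Fin n → ZMod 2) : ℕ∞ :=
  ⨅ (i : Fin n) (_ : u i ≠ 0), (((i : ℕ) + 1 : ℕ) : ℕ∞)

/-!
Suppose `u₀` attains the minimum, `m = i₀ + 1`, and put `L = n₁ − R̄₃`. Row `i₀ + t` of
`Ḡ(g₀) u₀` is `[g₀]_t` plus a combination of the digits `[g₀]_s` with `s < t`. Hence, once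
`g₁, g₂` are fixed, the vanishing of rows `i₀, …, L − 1` determines `[g₀]_0, …, [g₀]_{L−m}` one
after the other, which confines `g₀` to a dyadic interval of length `2^{m−L}`; Fubini gives the
bound. If `u₀` alone attains the minimum, row `i₀` reads `[g₀]_0 = 0`, impossible for
`g₀ ∈ (1, 2)`, so `B″ ⊆ {g₀ = 2}`. The other cases reduce to this one by permuting the factors
of `ℝ³`.
-/

open Set

lemma floor_two_mul_sub_two_mul_floor_eq_zero_or_one (x : ℝ) :
    ⌊2 * x⌋ - 2 * ⌊x⌋ = 0 ∨ ⌊2 * x⌋ - 2 * ⌊x⌋ = 1 := by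
  have h₁ : 2 * ⌊x⌋ ≤ ⌊2 * x⌋ := Int.le_floor.mpr (by push_cast; linarith [Int.floor_le x])
  have h₂ : ⌊2 * x⌋ < 2 * ⌊x⌋ + 2 :=
    Int.floor_lt.mpr (by push_cast; linarith [Int.lt_floor_add_one x])
  omega

lemma floor_eq_one_of_mem_Ico {g : ℝ} (hg : g ∈ Ico (1 : ℝ) 2) : ⌊g⌋ = 1 :=
  Int.floor_eq_iff.mpr (by norm_num; exact hg)

section binDigit

lemma binDigit_succ (g : ℝ) (t : ℕ) :
    binDigit g (t + 1) = ((⌊2 * (2 ^ t * g)⌋ - 2 * ⌊2 ^ t * g⌋ : ℤ) : ZMod 2) := by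
  rw [binDigit, Nat.cast_add, Nat.cast_one, add_sub_cancel_right, zpow_add_one₀ two_ne_zero,
    zpow_natCast, mul_comm _ (2 : ℝ), mul_assoc]

lemma binDigit_zero_of_mem_Ico {g : ℝ} (hg : g ∈ Ico (1 : ℝ) 2) : binDigit g 0 = 1 := by
  have h₁ := floor_eq_one_of_mem_Ico hg
  have h₂ : ⌊2⁻¹ * g⌋ = 0 := Int.floor_eq_zero_iff.mpr (by constructor <;> linarith [hg.1, hg.2])
  simp [binDigit, h₁, h₂]

lemma floor_two_pow_mul_eq_of_binDigit_eq {g g' : ℝ} (h₀ : ⌊g⌋ = ⌊g'⌋) {D : ℕ}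
    (h : ∀ t ≤ D, binDigit g t = binDigit g' t) : ⌊2 ^ D * g⌋ = ⌊2 ^ D * g'⌋ := by
  induction D with
  | zero => simpa using h₀
  | succ D ih =>
    have hD := ih fun t ht => h t (by omega)
    have hdig := h (D + 1) le_rfl
    rw [binDigit_succ, binDigit_succ, ZMod.intCast_eq_intCast_iff'] at hdig
    push_cast at hdig
    rw [pow_succ', mul_assoc, mul_assoc]
    have := floor_two_mul_sub_two_mul_floor_eq_zero_or_one (2 ^ D * g)
    have := floor_two_mul_sub_two_mul_floor_eq_zero_or_one (2 ^ D * g')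
    omega

lemma measurable_binDigit (j : ℕ) : Measurable (binDigit · j) :=
  (measurable_of_countable fun p : ℤ × ℤ => ((p.1 - 2 * p.2 : ℤ) : ZMod 2)).comp
    ((measurable_const.mul measurable_id).floor.prodMk (measurable_const.mul measurable_id).floor)

end binDigit

section Gmat

variable {n : ℕ}

-- `Matrix` carries no measurable structure, so `Gmat n` is viewed as a plain function.
lemma measurable_Gmat (n : ℕ) : Measurable (β := Fin n → Fin n → ZMod 2) (Gmat n) := by
  refine measurable_pi_lambda _ fun i => measurable_pi_lambda _ fun j => ?_
  unfold Gmat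
  split_ifs
  · exact measurable_binDigit _
  · exact measurable_const

lemma Gmat_mulVec_apply (g : ℝ) (u : Fin n → ZMod 2) (i : Fin n) :
    (Gmat n g *ᵥ u) i = ∑ j : Fin n, (if (j : ℕ) ≤ i then binDigit g (i - j) else 0) * u j :=
  rfl

lemma Gmat_mulVec_apply_eq_zero (g : ℝ) {u : Fin n → ZMod 2} {i : Fin n}
    (hu : ∀ j ≤ i, u j = 0) : (Gmat n g *ᵥ u) i = 0 := by
  rw [Gmat_mulVec_apply]
  refine Finset.sum_eq_zero fun j _ => ?_
  split_ifs with hj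
  · rw [hu j hj, mul_zero]
  · rw [zero_mul]

lemma Gmat_mulVec_apply_eq_add (g : ℝ) {u : Fin n → ZMod 2} {i₀ : Fin n}
    (hu : u i₀ = 1) (hlt : ∀ j < i₀, u j = 0) {i : Fin n} (hi : i₀ ≤ i) :
    (Gmat n g *ᵥ u) i = binDigit g (i - i₀) + ∑ j ∈ Finset.Ioc i₀ i, binDigit g (i - j) * u j := by
  rw [Gmat_mulVec_apply, ← Finset.add_sum_erase _ _ (Finset.mem_univ i₀),
    if_pos (Fin.le_def.mp hi), hu, mul_one]
  congr 1
  rw [← Finset.sum_subset (s₁ := Finset.Ioc i₀ i)]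
  · exact Finset.sum_congr rfl fun j hj => by
      rw [if_pos (Fin.le_def.mp (Finset.mem_Ioc.mp hj).2)]
  · intro j hj
    rw [Finset.mem_Ioc] at hj
    exact Finset.mem_erase.mpr ⟨hj.1.ne', Finset.mem_univ j⟩
  · intro j hj hj'
    rw [Finset.mem_Ioc, not_and_or, not_lt, not_le] at hj'
    rcases hj' with hj' | hj'
    · rw [hlt j (lt_of_le_of_ne hj' (Finset.ne_of_mem_erase hj)), mul_zero]
    · rw [if_neg (not_le.mpr (Fin.lt_def.mp hj')), zero_mul]

lemma binDigit_eq_of_Gmat_mulVec_eq {u : Fin n → ZMod 2} {i₀ : Fin n} (hu : u i₀ = 1)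
    (hlt : ∀ j < i₀, u j = 0) {g g' : ℝ} {D : ℕ} (hD : (i₀ : ℕ) + D < n)
    (h : ∀ i : Fin n, (i : ℕ) ≤ i₀ + D → (Gmat n g *ᵥ u) i = (Gmat n g' *ᵥ u) i) :
    ∀ t ≤ D, binDigit g t = binDigit g' t := by
  intro t
  induction t using Nat.strong_induction_on with
  | _ t ih =>
  intro ht
  let i : Fin n := ⟨i₀ + t, by omega⟩
  have hival : (i : ℕ) = i₀ + t := rfl
  have hi : i₀ ≤ i := Fin.le_def.mpr (Nat.le_add_right _ _)
  have hrow := h i (by omega)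
  have hsum : ∑ j ∈ Finset.Ioc i₀ i, binDigit g (i - j) * u j =
      ∑ j ∈ Finset.Ioc i₀ i, binDigit g' (i - j) * u j := by
    refine Finset.sum_congr rfl fun j hj => ?_
    rw [Finset.mem_Ioc, Fin.lt_def, Fin.le_def] at hj
    rw [ih (i - j) (by omega) (by omega)]
  rw [Gmat_mulVec_apply_eq_add g hu hlt hi, Gmat_mulVec_apply_eq_add g' hu hlt hi, hsum] at hrow
  rwa [hival, Nat.add_sub_cancel_left, add_left_inj] at hrow

end Gmat

lemma volume_le_of_floor_mul_eq {s : Set ℝ} {a : ℝ} (ha : 0 < a)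
    (hs : ∀ x ∈ s, ∀ y ∈ s, ⌊a * x⌋ = ⌊a * y⌋) : volume s ≤ ENNReal.ofReal a⁻¹ := by
  rcases s.eq_empty_or_nonempty with rfl | ⟨x₀, hx₀⟩
  · simp
  calc volume s ≤ volume (Ico (⌊a * x₀⌋ / a) ((⌊a * x₀⌋ + 1) / a)) := by
        refine measure_mono fun x hx => ?_
        rw [mem_Ico, div_le_iff₀ ha, lt_div_iff₀ ha, hs x₀ hx₀ x hx, mul_comm x]
        exact ⟨Int.floor_le _, Int.lt_floor_add_one _⟩
    _ = ENNReal.ofReal a⁻¹ := by rw [Real.volume_Ico]; congr 1; field_simp; ring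

lemma MeasureTheory.Measure.prod_apply_le_of_slice_le {α β : Type*} [MeasurableSpace α]
    [MeasurableSpace β] {μ : Measure α} {ν : Measure β} [SFinite μ] [SFinite ν]
    {s : Set (α × β)} (hs : MeasurableSet s) {t : Set β} (ht : MeasurableSet t)
    (hst : ∀ p ∈ s, p.2 ∈ t) {c : ENNReal} (hc : ∀ y, μ ((·, y) ⁻¹' s) ≤ c) :
    μ.prod ν s ≤ c * ν t := by
  rw [Measure.prod_apply_symm hs, ← lintegral_indicator_const ht]
  refine lintegral_mono fun y => ?_
  by_cases hy : y ∈ t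
  · simpa [hy] using hc y
  · have : (·, y) ⁻¹' s = ∅ := eq_empty_of_forall_notMem fun x hx => hy (hst _ hx)
    simp [hy, this]

section swap

variable {α β γ : Type*} [MeasureSpace α] [MeasureSpace β] [MeasureSpace γ]
  [SFinite (volume : Measure α)] [SFinite (volume : Measure β)] [SFinite (volume : Measure γ)]

lemma volume_preserving_swap_left :
    MeasurePreserving (fun p : α × β × γ => (p.2.1, p.1, p.2.2)) :=
  volume_preserving_prodAssoc.comp <|
    (Measure.measurePreserving_swap.prod (MeasurePreserving.id volume)).comp
      volume_preserving_prodAssoc.symm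

lemma volume_preserving_swap_right :
    MeasurePreserving (fun p : α × β × γ => (p.1, p.2.2, p.2.1)) :=
  (MeasurePreserving.id volume).prod Measure.measurePreserving_swap

end swap

lemma ExistsUnique.apply_ne {ι α : Type*} {f : ι → α} {a : α} (h : ∃! i, f i = a) {i j : ι}
    (hji : j ≠ i) (hi : f i = a) : f j ≠ a :=
  fun hj => hji (h.unique hj hi)

section firstIdx

variable {n : ℕ} {u : Fin n → ZMod 2}

lemma firstIdx_le {i : Fin n} (h : u i ≠ 0) : firstIdx u ≤ ((i + 1 : ℕ) : ℕ∞) :=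
  iInf₂_le i h

lemma eq_zero_of_lt_firstIdx {i : Fin n} (h : ((i + 1 : ℕ) : ℕ∞) < firstIdx u) : u i = 0 :=
  by_contra fun hi => (firstIdx_le hi).not_gt h

lemma ne_zero_of_firstIdx_eq {m : ℕ} (h : firstIdx u = m) : u ≠ 0 := by
  rintro rfl
  simp [firstIdx] at h

lemma exists_of_firstIdx_eq {m : ℕ} (h : firstIdx u = m) :
    ∃ i₀ : Fin n, (i₀ + 1 : ℕ) = m ∧ u i₀ = 1 ∧ ∀ j < i₀, u j = 0 := by
  obtain ⟨i₀, hi₀, hmin⟩ := WellFounded.has_min wellFounded_lt {i | u i ≠ 0}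
    (Function.ne_iff.mp (ne_zero_of_firstIdx_eq h))
  have hlt : ∀ j < i₀, u j = 0 := fun j hj => by_contra fun hj' => hmin j hj' hj
  have heq : firstIdx u = ((i₀ + 1 : ℕ) : ℕ∞) :=
    (firstIdx_le hi₀).antisymm <| le_iInf₂ fun j hj => by
      exact_mod_cast Nat.succ_le_succ (not_lt.mp (hmin j hj))
  have hone : ∀ x : ZMod 2, x ≠ 0 → x = 1 := by decide
  exact ⟨i₀, by exact_mod_cast heq.symm.trans h, hone _ hi₀, hlt⟩

end firstIdx

-- The set `B″` of the paper, with `L = n₁ − R̄₃` constrained rows.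
def vanishingSet (n L : ℕ) (u₀ u₁ u₂ : Fin n → ZMod 2) : Set (ℝ × ℝ × ℝ) :=
  {g | g.1 ∈ Ioc (1:ℝ) 2 ∧ g.2.1 ∈ Ioc (1:ℝ) 2 ∧ g.2.2 ∈ Ioc (1:ℝ) 2 ∧
    ∀ i : Fin n, (i : ℕ) + 1 ≤ L →
      (Gmat n g.1 *ᵥ u₀ + Gmat n g.2.1 *ᵥ u₁ + Gmat n g.2.2 *ᵥ u₂) i = 0}

section vanishingSet

variable {n L : ℕ}

lemma measurableSet_vanishingSet (u₀ u₁ u₂ : Fin n → ZMod 2) :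
    MeasurableSet (vanishingSet n L u₀ u₁ u₂) := by
  have hG := measurable_Gmat n
  have hmeas : Measurable fun g : ℝ × ℝ × ℝ =>
      ((Gmat n g.1, Gmat n g.2.1, Gmat n g.2.2) :
        (Fin n → Fin n → ZMod 2) × (Fin n → Fin n → ZMod 2) × (Fin n → Fin n → ZMod 2)) :=
    (hG.comp measurable_fst).prodMk
      ((hG.comp measurable_snd.fst).prodMk (hG.comp measurable_snd.snd))
  rw [vanishingSet, ofPred_and, ofPred_and, ofPred_and]
  exact (measurable_fst measurableSet_Ioc).inter ((measurable_snd.fst measurableSet_Ioc).inter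
    ((measurable_snd.snd measurableSet_Ioc).inter (hmeas (t := {M | ∀ i : Fin n, (i : ℕ) + 1 ≤ L →
      (M.1 *ᵥ u₀ + M.2.1 *ᵥ u₁ + M.2.2 *ᵥ u₂) i = 0}) (to_countable _).measurableSet)))

lemma volume_vanishingSet_le (hLn : L ≤ n) {u₀ : Fin n → ZMod 2} (u₁ u₂ : Fin n → ZMod 2)
    {i₀ : Fin n} (hu : u₀ i₀ = 1) (hlt : ∀ j < i₀, u₀ j = 0) (hi₀ : (i₀ : ℕ) < L) :
    volume (vanishingSet n L u₀ u₁ u₂) ≤ ENNReal.ofReal ((2 ^ (L - (i₀ + 1)))⁻¹) := by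
  set D := L - (i₀ + 1)
  have hbase : volume (Ioc (1:ℝ) 2 ×ˢ Ioc (1:ℝ) 2) = 1 := by
    rw [Measure.volume_eq_prod, Measure.prod_prod, Real.volume_Ioc]; norm_num
  rw [Measure.volume_eq_prod]
  refine (Measure.prod_apply_le_of_slice_le (measurableSet_vanishingSet u₀ u₁ u₂)
    (measurableSet_Ioc.prod measurableSet_Ioc) (fun p hp => ⟨hp.2.1, hp.2.2.1⟩)
    fun y => ?_).trans_eq (by rw [hbase, mul_one])
  rw [← measure_sdiff_null (t := {2}) Real.volume_singleton]
  refine volume_le_of_floor_mul_eq (by positivity) fun x hx x' hx' => ?_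
  obtain ⟨⟨hxI, -, -, hx⟩, hx2⟩ := hx
  obtain ⟨⟨hxI', -, -, hx'⟩, hx2'⟩ := hx'
  have hfloor : ⌊x⌋ = ⌊x'⌋ := by
    rw [floor_eq_one_of_mem_Ico ⟨hxI.1.le, lt_of_le_of_ne hxI.2 hx2⟩,
      floor_eq_one_of_mem_Ico ⟨hxI'.1.le, lt_of_le_of_ne hxI'.2 hx2'⟩]
  have hrows : ∀ i : Fin n, (i : ℕ) ≤ i₀ + D →
      (Gmat n x *ᵥ u₀) i = (Gmat n x' *ᵥ u₀) i := by
    intro i hi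
    have e := hx i (by omega)
    have e' := hx' i (by omega)
    simp only [Pi.add_apply] at e e'
    linear_combination e - e'
  exact floor_two_pow_mul_eq_of_binDigit_eq hfloor
    (binDigit_eq_of_Gmat_mulVec_eq hu hlt (by omega) hrows)

lemma volume_vanishingSet_eq_zero {u₀ u₁ u₂ : Fin n → ZMod 2} {i₀ : Fin n} (hu : u₀ i₀ = 1)
    (hlt : ∀ j < i₀, u₀ j = 0) (hi₀ : (i₀ : ℕ) < L) (h₁ : ∀ j ≤ i₀, u₁ j = 0)
    (h₂ : ∀ j ≤ i₀, u₂ j = 0) : volume (vanishingSet n L u₀ u₁ u₂) = 0 := by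
  refine measure_mono_null (t := {2} ×ˢ univ) (fun g hg => ?_) ?_
  · obtain ⟨hgI, -, -, hrows⟩ := hg
    refine ⟨by_contra fun hg2 => ?_, trivial⟩
    have e := hrows i₀ (by omega)
    rw [Pi.add_apply, Pi.add_apply, Gmat_mulVec_apply_eq_add _ hu hlt le_rfl, Finset.Ioc_self,
      Finset.sum_empty, Nat.sub_self, binDigit_zero_of_mem_Ico ⟨hgI.1.le, lt_of_le_of_ne hgI.2 hg2⟩,
      Gmat_mulVec_apply_eq_zero _ h₁, Gmat_mulVec_apply_eq_zero _ h₂, add_zero, add_zero,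
      add_zero] at e
    exact one_ne_zero e
  · rw [Measure.volume_eq_prod, Measure.prod_prod, Real.volume_singleton, zero_mul]

lemma volume_vanishingSet_of_firstIdx_eq (hLn : L ≤ n) {m : ℕ} {u₀ u₁ u₂ : Fin n → ZMod 2}
    (h₀ : firstIdx u₀ = m) (hmL : m ≤ L) (h₁ : (m : ℕ∞) ≤ firstIdx u₁)
    (h₂ : (m : ℕ∞) ≤ firstIdx u₂) :
    volume (vanishingSet n L u₀ u₁ u₂) ≤ ENNReal.ofReal (2 ^ ((m : ℤ) - L)) ∧
      (firstIdx u₁ ≠ m → firstIdx u₂ ≠ m → volume (vanishingSet n L u₀ u₁ u₂) = 0) := by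
  obtain ⟨i₀, rfl, hu, hlt⟩ := exists_of_firstIdx_eq h₀
  have hvanish : ∀ u : Fin n → ZMod 2, ((i₀ + 1 : ℕ) : ℕ∞) < firstIdx u → ∀ j ≤ i₀, u j = 0 :=
    fun u hu j hj =>
      eq_zero_of_lt_firstIdx <| lt_of_le_of_lt (by exact_mod_cast Nat.succ_le_succ hj) hu
  refine ⟨(volume_vanishingSet_le hLn u₁ u₂ hu hlt hmL).trans_eq ?_, fun h₁' h₂' =>
    volume_vanishingSet_eq_zero hu hlt hmL (hvanish u₁ (h₁.lt_of_ne' h₁'))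
      (hvanish u₂ (h₂.lt_of_ne' h₂'))⟩
  rw [← zpow_natCast, ← _root_.zpow_neg]
  congr 2
  omega

lemma vanishingSet_swap_left (u₀ u₁ u₂ : Fin n → ZMod 2) :
    vanishingSet n L u₁ u₀ u₂ =
      (fun g : ℝ × ℝ × ℝ => (g.2.1, g.1, g.2.2)) ⁻¹' vanishingSet n L u₀ u₁ u₂ := by
  ext g
  simp only [vanishingSet, mem_preimage, mem_ofPred_eq, add_comm (Gmat n g.1 *ᵥ u₁)]
  tauto

lemma vanishingSet_swap_right (u₀ u₁ u₂ : Fin n → ZMod 2) :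
    vanishingSet n L u₀ u₂ u₁ =
      (fun g : ℝ × ℝ × ℝ => (g.1, g.2.2, g.2.1)) ⁻¹' vanishingSet n L u₀ u₁ u₂ := by
  ext g
  simp only [vanishingSet, mem_preimage, mem_ofPred_eq, add_assoc,
    add_comm (Gmat n g.2.1 *ᵥ u₂)]
  tauto

lemma volume_vanishingSet_swap_left (u₀ u₁ u₂ : Fin n → ZMod 2) :
    volume (vanishingSet n L u₁ u₀ u₂) = volume (vanishingSet n L u₀ u₁ u₂) := by
  rw [vanishingSet_swap_left]
  exact volume_preserving_swap_left.measure_preimage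
    (measurableSet_vanishingSet u₀ u₁ u₂).nullMeasurableSet

lemma volume_vanishingSet_swap_right (u₀ u₁ u₂ : Fin n → ZMod 2) :
    volume (vanishingSet n L u₀ u₂ u₁) = volume (vanishingSet n L u₀ u₁ u₂) := by
  rw [vanishingSet_swap_right]
  exact volume_preserving_swap_right.measure_preimage
    (measurableSet_vanishingSet u₀ u₁ u₂).nullMeasurableSet

end vanishingSet

theorem stmt_8_general (n1 R3 : ℕ) (hR3 : R3 ≤ n1)
    (u0 u1 u2 : Fin n1 → ZMod 2)
    (h0 : u0 ≠ 0 → firstIdx u0 ≤ ((n1 - R3 : ℕ) : ℕ∞))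
    (h1 : u1 ≠ 0 → firstIdx u1 ≤ ((n1 - R3 : ℕ) : ℕ∞))
    (h2 : u2 ≠ 0 → firstIdx u2 ≤ ((n1 - R3 : ℕ) : ℕ∞))
    (m : ℕ) (hm : (m : ℕ∞) = min (firstIdx u0) (min (firstIdx u1) (firstIdx u2)))
    (B : Set (ℝ × ℝ × ℝ))
    (hB : B = {g : ℝ × ℝ × ℝ |
        g.1 ∈ Set.Ioc (1:ℝ) 2 ∧ g.2.1 ∈ Set.Ioc (1:ℝ) 2 ∧ g.2.2 ∈ Set.Ioc (1:ℝ) 2 ∧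
        ∀ i : Fin n1, (i : ℕ) + 1 ≤ n1 - R3 →
          (Gmat n1 g.1 *ᵥ u0 + Gmat n1 g.2.1 *ᵥ u1 + Gmat n1 g.2.2 *ᵥ u2) i = 0}) :
    volume B ≤ ENNReal.ofReal ((2:ℝ) ^ ((R3 : ℤ) - (n1 : ℤ) + (m : ℤ))) ∧
      ((∃! k : Fin 3, ![firstIdx u0, firstIdx u1, firstIdx u2] k = (m : ℕ∞)) →
        volume B = 0) := by
  change B = vanishingSet n1 (n1 - R3) u0 u1 u2 at hB
  have hexp : (R3 : ℤ) - n1 + m = m - (n1 - R3 : ℕ) := by omega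
  rw [hB, hexp]
  obtain ⟨hm0, hm1, hm2⟩ :
      (m : ℕ∞) ≤ firstIdx u0 ∧ (m : ℕ∞) ≤ firstIdx u1 ∧ (m : ℕ∞) ≤ firstIdx u2 := by
    simp [hm]
  have hmL : ∀ u : Fin n1 → ZMod 2, (u ≠ 0 → firstIdx u ≤ ((n1 - R3 : ℕ) : ℕ∞)) →
      firstIdx u = m → m ≤ n1 - R3 := fun u hu h => by
    have := hu (ne_zero_of_firstIdx_eq h)
    rw [h] at this
    exact_mod_cast this
  have hatt : firstIdx u0 = m ∨ firstIdx u1 = m ∨ firstIdx u2 = m := by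
    rw [hm]
    rcases min_choice (firstIdx u1) (firstIdx u2) with h | h <;>
      rcases min_choice (firstIdx u0) (min (firstIdx u1) (firstIdx u2)) with h' | h' <;> simp_all
  have hLn := Nat.sub_le n1 R3
  rcases hatt with h | h | h
  · obtain ⟨hle, hzero⟩ := volume_vanishingSet_of_firstIdx_eq hLn h (hmL u0 h0 h) hm1 hm2
    exact ⟨hle, fun hu => hzero (hu.apply_ne (by decide : (1 : Fin 3) ≠ 0) h)
      (hu.apply_ne (by decide : (2 : Fin 3) ≠ 0) h)⟩
  · obtain ⟨hle, hzero⟩ := volume_vanishingSet_of_firstIdx_eq hLn h (hmL u1 h1 h) hm0 hm2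
    rw [← volume_vanishingSet_swap_left]
    exact ⟨hle, fun hu => hzero (hu.apply_ne (by decide : (0 : Fin 3) ≠ 1) h)
      (hu.apply_ne (by decide : (2 : Fin 3) ≠ 1) h)⟩
  · obtain ⟨hle, hzero⟩ := volume_vanishingSet_of_firstIdx_eq hLn h (hmL u2 h2 h) hm0 hm1
    rw [← volume_vanishingSet_swap_right, ← volume_vanishingSet_swap_left]
    exact ⟨hle, fun hu => hzero (hu.apply_ne (by decide : (0 : Fin 3) ≠ 2) h)
      (hu.apply_ne (by decide : (1 : Fin 3) ≠ 2) h)⟩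

/-- the per-tuple measure bound from the proof of Lemma 4 of the
paper. -/
theorem stmt_8 (n1 R3 : ℕ) (hR3 : R3 ≤ n1)
    (u0 u1 u2 : Fin n1 → ZMod 2) (hne : ¬(u0 = 0 ∧ u1 = 0 ∧ u2 = 0))
    (h0 : u0 ≠ 0 → firstIdx u0 ≤ ((n1 - R3 : ℕ) : ℕ∞))
    (h1 : u1 ≠ 0 → firstIdx u1 ≤ ((n1 - R3 : ℕ) : ℕ∞))
    (h2 : u2 ≠ 0 → firstIdx u2 ≤ ((n1 - R3 : ℕ) : ℕ∞))
    (m : ℕ) (hm : (m : ℕ∞) = min (firstIdx u0) (min (firstIdx u1) (firstIdx u2)))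
    (B : Set (ℝ × ℝ × ℝ))
    (hB : B = {g : ℝ × ℝ × ℝ |
        g.1 ∈ Set.Ioc (1:ℝ) 2 ∧ g.2.1 ∈ Set.Ioc (1:ℝ) 2 ∧ g.2.2 ∈ Set.Ioc (1:ℝ) 2 ∧
        ∀ i : Fin n1, (i : ℕ) + 1 ≤ n1 - R3 →
          (Gmat n1 g.1 *ᵥ u0 + Gmat n1 g.2.1 *ᵥ u1 + Gmat n1 g.2.2 *ᵥ u2) i = 0}) :
    volume B ≤ ENNReal.ofReal ((2:ℝ) ^ ((R3 : ℤ) - (n1 : ℤ) + (m : ℤ))) ∧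
      ((∃! k : Fin 3, ![firstIdx u0, firstIdx u1, firstIdx u2] k = (m : ℕ∞)) →
        volume B = 0) :=
  stmt_8_general n1 R3 hR3 u0 u1 u2 h0 h1 h2 m hm B hB
end
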